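/- arXiv:2506.17972 — 8 statements merged into one kernel-verified Lean document; each statement's English description precedes it below -/
import Mathlib

section
/- The nonnegative orthant is positively invariant for the SIDTHE dynamics: if u : ℝ → [0,1] is continuous and x : ℝ → ℝ⁶ is differentiable with x'(t) = f(x(t), u(t)) for all t ≥ 0, and all six components of x(0) are nonnegative, then all six components of x(t) are nonnegative for every t ≥ 0. -/
open Set intervalIntegral

lemma linODE_nonneg (a g r : ℝ → ℝ)
    (ha : ∀ t : ℝ, 0 ≤ t → ContinuousAt a t)
    (hg : ∀ t : ℝ, 0 ≤ t → HasDerivAt g (a t * g t + r t) t)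
    (hr : ∀ t : ℝ, 0 ≤ t → 0 ≤ r t)
    (h0 : 0 ≤ g 0) : ∀ t : ℝ, 0 ≤ t → 0 ≤ g t := by
  set b : ℝ → ℝ := fun s => a (max s 0) with hb
  have hbc : Continuous b := by
    rw [continuous_iff_continuousAt]
    intro s
    have hm : ContinuousAt (fun s : ℝ => max s 0) s := continuousAt_id.max continuousAt_const
    have := ContinuousAt.comp (x := s) (f := fun s : ℝ => max s 0) (ha (max s 0) (le_max_right s 0)) hm
    exact this
  set A : ℝ → ℝ := fun t => ∫ s in (0:ℝ)..t, b s with hA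
  have hAd : ∀ t : ℝ, HasDerivAt A (b t) t := by
    intro t
    exact intervalIntegral.integral_hasDerivAt_right
      (hbc.intervalIntegrable 0 t)
      (hbc.stronglyMeasurable.stronglyMeasurableAtFilter)
      hbc.continuousAt
  set h : ℝ → ℝ := fun t => g t * Real.exp (-A t) with hh
  have hd : ∀ t : ℝ, 0 ≤ t → HasDerivAt h (r t * Real.exp (-A t)) t := by
    intro t ht
    have h1 := (hg t ht).mul ((hAd t).neg.exp)
    have hbt : b t = a t := by simp [hb, max_eq_left ht]
    exact h1.congr_deriv (by rw [hbt]; simp only [Pi.neg_apply]; ring)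
  have hmono : MonotoneOn h (Ici (0:ℝ)) := by
    apply monotoneOn_of_deriv_nonneg (convex_Ici 0)
    · intro t ht
      exact (hd t ht).continuousAt.continuousWithinAt
    · intro t ht
      rw [interior_Ici] at ht
      exact (hd t ht.le).differentiableAt.differentiableWithinAt
    · intro t ht
      rw [interior_Ici] at ht
      rw [(hd t ht.le).deriv]
      exact mul_nonneg (hr t ht.le) (Real.exp_nonneg _)
  intro t ht
  have h1 : h 0 ≤ h t := hmono (self_mem_Ici) ht ht
  have h2 : 0 ≤ h 0 := mul_nonneg h0 (Real.exp_nonneg _)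
  have h3 : 0 ≤ h t := le_trans h2 h1
  have := mul_nonneg h3 (Real.exp_nonneg (A t))
  simpa [hh, mul_assoc, ← Real.exp_add] using this

/-- The SIDTHE vector field. State ordering: (S, I, D, T, H, E). -/
noncomputable def sidthe (α γ lam δ σ τ u : ℝ) (x : Fin 6 → ℝ) : Fin 6 → ℝ :=
  ![-(α * (1 - u) * x 0 * x 1),
    α * (1 - u) * x 0 * x 1 - γ * (1 + lam / (lam + γ)) * x 1,
    γ * x 1 - (δ + lam) * x 2,
    δ * x 2 - (σ + τ) * x 3,
    σ * x 3 + lam * x 2 + lam * γ / (lam + γ) * x 1,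
    τ * x 3]

/-- the nonnegative orthant is positively invariant for SIDTHE. -/
theorem sidthe_nonneg_invariant (α γ lam δ σ τ : ℝ)
    (hα : 0 < α) (hγ : 0 < γ) (hlam : 0 < lam) (hδ : 0 < δ) (hσ : 0 < σ) (hτ : 0 < τ)
    (u : ℝ → ℝ) (hu_cont : Continuous u) (hu_mem : ∀ t, u t ∈ Set.Icc (0 : ℝ) 1)
    (x : ℝ → Fin 6 → ℝ)
    (hx : ∀ t : ℝ, 0 ≤ t → HasDerivAt x (sidthe α γ lam δ σ τ (u t) (x t)) t)
    (h0 : ∀ i, 0 ≤ x 0 i) :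
    ∀ t : ℝ, 0 ≤ t → ∀ i, 0 ≤ x t i := by
  have hxi : ∀ (i : Fin 6) (t : ℝ), 0 ≤ t →
      HasDerivAt (fun s => x s i) (sidthe α γ lam δ σ τ (u t) (x t) i) t := by
    intro i t ht
    exact (hasDerivAt_pi.mp (hx t ht)) i
  have hc : ∀ (i : Fin 6) (t : ℝ), 0 ≤ t → ContinuousAt (fun s => x s i) t :=
    fun i t ht => (hxi i t ht).continuousAt
  -- S
  have hS : ∀ t : ℝ, 0 ≤ t → 0 ≤ x t 0 := by
    apply linODE_nonneg (fun t => -(α * (1 - u t) * x t 1)) (fun t => x t 0) (fun _ => 0)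
    · intro t ht
      exact ((continuousAt_const.mul (continuousAt_const.sub hu_cont.continuousAt)).mul
        (hc 1 t ht)).neg
    · intro t ht
      have := hxi 0 t ht
      convert this using 1
      simp [sidthe]; ring
    · intro t _; exact le_refl 0
    · exact h0 0
  -- I
  have hI : ∀ t : ℝ, 0 ≤ t → 0 ≤ x t 1 := by
    apply linODE_nonneg
      (fun t => α * (1 - u t) * x t 0 - γ * (1 + lam / (lam + γ))) (fun t => x t 1) (fun _ => 0)
    · intro t ht
      exact ((continuousAt_const.mul (continuousAt_const.sub hu_cont.continuousAt)).mul
        (hc 0 t ht)).sub continuousAt_const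
    · intro t ht
      have := hxi 1 t ht
      convert this using 1
      simp [sidthe]; ring
    · intro t _; exact le_refl 0
    · exact h0 1
  -- D
  have hD : ∀ t : ℝ, 0 ≤ t → 0 ≤ x t 2 := by
    apply linODE_nonneg (fun _ => -(δ + lam)) (fun t => x t 2) (fun t => γ * x t 1)
    · intro t _; exact continuousAt_const
    · intro t ht
      have := hxi 2 t ht
      convert this using 1
      simp [sidthe]; ring
    · intro t ht; exact mul_nonneg hγ.le (hI t ht)
    · exact h0 2
  -- T
  have hT : ∀ t : ℝ, 0 ≤ t → 0 ≤ x t 3 := by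
    apply linODE_nonneg (fun _ => -(σ + τ)) (fun t => x t 3) (fun t => δ * x t 2)
    · intro t _; exact continuousAt_const
    · intro t ht
      have := hxi 3 t ht
      convert this using 1
      simp [sidthe]; ring
    · intro t ht; exact mul_nonneg hδ.le (hD t ht)
    · exact h0 3
  -- H
  have hH : ∀ t : ℝ, 0 ≤ t → 0 ≤ x t 4 := by
    apply linODE_nonneg (fun _ => 0) (fun t => x t 4)
      (fun t => σ * x t 3 + lam * x t 2 + lam * γ / (lam + γ) * x t 1)
    · intro t _; exact continuousAt_const
    · intro t ht
      have := hxi 4 t ht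
      convert this using 1
      simp [sidthe]
    · intro t ht
      have h1 : (0:ℝ) ≤ lam * γ / (lam + γ) := by positivity
      have := add_nonneg (add_nonneg (mul_nonneg hσ.le (hT t ht)) (mul_nonneg hlam.le (hD t ht)))
        (mul_nonneg h1 (hI t ht))
      linarith
    · exact h0 4
  -- E
  have hE : ∀ t : ℝ, 0 ≤ t → 0 ≤ x t 5 := by
    apply linODE_nonneg (fun _ => 0) (fun t => x t 5) (fun t => τ * x t 3)
    · intro t _; exact continuousAt_const
    · intro t ht
      have := hxi 5 t ht
      convert this using 1
      rw [show sidthe α γ lam δ σ τ (u t) (x t) 5 = τ * x t 3 from rfl]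
      ring
    · intro t ht; exact mul_nonneg hτ.le (hT t ht)
    · exact h0 5
  intro t ht i
  fin_cases i
  · exact hS t ht
  · exact hI t ht
  · exact hD t ht
  · exact hT t ht
  · exact hH t ht
  · exact hE t ht
end

section
/- If 0 ≤ S ≤ S_max, I ≥ 0, and u ∈ [0,1], then the infected component of the SIDTHE vector field satisfies İ = α(1−u)SI − γ(1 + λ/(λ+γ))I ≤ γ(1 + λ/(λ+γ))·I·((1−u)/(1−u_max) − 1). In particular, if u = u_max then İ ≤ 0 whenever 0 ≤ S ≤ S_max and I ≥ 0. -/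
/-- bound on the infected component of the SIDTHE vector field, and
its nonpositivity for `u = u_max`, whenever `0 ≤ S ≤ S_max` and `I ≥ 0`. -/
theorem sidthe_Idot_bound (α γ lam δ σ τ : ℝ)
    (hα : 0 < α) (hγ : 0 < γ) (hlam : 0 < lam) (hδ : 0 < δ) (hσ : 0 < σ) (hτ : 0 < τ)
    (umax : ℝ) (humax : 0 ≤ umax) (humax1 : umax < 1)
    (Smax : ℝ) (hSmax : Smax = γ / (α * (1 - umax)) * (1 + lam / (lam + γ)))
    (S I u : ℝ) (hS0 : 0 ≤ S) (hS : S ≤ Smax) (hI : 0 ≤ I) (hu : u ∈ Set.Icc (0 : ℝ) 1) :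
    α * (1 - u) * S * I - γ * (1 + lam / (lam + γ)) * I
        ≤ γ * (1 + lam / (lam + γ)) * I * ((1 - u) / (1 - umax) - 1)
    ∧ (u = umax →
        α * (1 - u) * S * I - γ * (1 + lam / (lam + γ)) * I ≤ 0) := by
  obtain ⟨hu0, hu1⟩ := hu
  have h1u : 0 ≤ 1 - u := by linarith
  have h1um : 0 < 1 - umax := by linarith
  have key : α * (1 - u) * S * I ≤ γ * (1 + lam / (lam + γ)) * I * ((1 - u) / (1 - umax)) := by
    have h2 : α * (1 - u) * S * I ≤ α * (1 - u) * Smax * I := by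
      have := mul_le_mul_of_nonneg_left hS (mul_nonneg hα.le h1u)
      exact mul_le_mul_of_nonneg_right this hI
    refine h2.trans_eq ?_
    rw [hSmax]
    field_simp
  constructor
  · linarith
  · intro h
    subst h
    rw [div_self h1um.ne', mul_one] at key
    linarith
end

section
/- Positive invariance of the safe set (Theorem 2, with the constant feedback u ≡ u_max): if x : ℝ → ℝ⁶ is differentiable with x'(t) = f(x(t), u_max) for all t ≥ 0, and x(0) lies in X_f ∩ Δ₆, then x(t) ∈ X_f for every t ≥ 0. -/
open Set Real

/-- Monotonicity on `[0, ∞)` from a nonnegative derivative. -/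
lemma sidthe_mono_aux {f f' : ℝ → ℝ}
    (hd : ∀ t ∈ Ici (0:ℝ), HasDerivAt f (f' t) t)
    (hpos : ∀ t ∈ Ici (0:ℝ), 0 ≤ f' t) : MonotoneOn f (Ici 0) := by
  refine monotoneOn_of_deriv_nonneg (convex_Ici 0)
    (fun t ht => (hd t ht).continuousAt.continuousWithinAt) ?_ ?_
  · rw [interior_Ici]
    exact fun t ht => (hd t (Ioi_subset_Ici_self ht)).differentiableAt.differentiableWithinAt
  · rw [interior_Ici]
    intro t ht
    rw [(hd t (Ioi_subset_Ici_self ht)).deriv]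
    exact hpos t (Ioi_subset_Ici_self ht)

/-- Comparison lemma: if `f' + k f ≥ 0` on `[0,∞)` and `f 0 ≥ 0`, then `f ≥ 0` on `[0,∞)`. -/
lemma sidthe_nonneg_aux (k : ℝ) {f f' : ℝ → ℝ}
    (hd : ∀ t ∈ Ici (0:ℝ), HasDerivAt f (f' t) t)
    (h : ∀ t ∈ Ici (0:ℝ), 0 ≤ f' t + k * f t) (h0 : 0 ≤ f 0) :
    ∀ t ∈ Ici (0:ℝ), 0 ≤ f t := by
  have hg : ∀ t ∈ Ici (0:ℝ),
      HasDerivAt (fun t => f t * Real.exp (k * t)) ((f' t + k * f t) * Real.exp (k * t)) t := by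
    intro t ht
    have h1 : HasDerivAt (fun t : ℝ => Real.exp (k * t)) (Real.exp (k * t) * k) t := by
      simpa using ((hasDerivAt_id t).const_mul k).exp
    have h2 := (hd t ht).fun_mul h1
    exact h2.congr_deriv (by ring)
  have hm := sidthe_mono_aux hg (fun t ht => mul_nonneg (h t ht) (Real.exp_nonneg _))
  intro t ht
  have h3 := hm self_mem_Ici ht ht
  simp only [mul_zero, Real.exp_zero, mul_one] at h3
  nlinarith [Real.exp_pos (k * t), h3]

/-- Sign preservation for `f' = a(t) f` with `a` continuous on `[0,∞)`. -/
lemma sidthe_sign_aux {f a : ℝ → ℝ}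
    (hd : ∀ t ∈ Ici (0:ℝ), HasDerivAt f (a t * f t) t)
    (ha : ContinuousOn a (Ici 0)) (h0 : 0 ≤ f 0) :
    ∀ t ∈ Ici (0:ℝ), 0 ≤ f t := by
  intro t0 ht0
  by_contra hneg
  push_neg at hneg
  have hsub : Icc (0:ℝ) t0 ⊆ Ici 0 := fun s hs => hs.1
  have hfc : ContinuousOn f (Icc 0 t0) :=
    fun s hs => (hd s (hsub hs)).continuousAt.continuousWithinAt
  obtain ⟨s, hs, hfs⟩ : ∃ s ∈ Icc (0:ℝ) t0, f s = 0 := by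
    have h1 : (0:ℝ) ∈ Icc (f t0) (f 0) := ⟨hneg.le, h0⟩
    obtain ⟨s, hs, hfs⟩ := intermediate_value_Icc' ht0 hfc h1
    exact ⟨s, hs, hfs⟩
  obtain ⟨C, hC⟩ := (isCompact_Icc (a := (0:ℝ)) (b := t0)).exists_bound_of_continuousOn
    (ha.mono hsub)
  have hC0 : 0 ≤ C := le_trans (norm_nonneg _) (hC 0 ⟨le_refl _, ht0⟩)
  set b : ℝ → ℝ := fun t => max (-C) (min C (a t)) with hbdef
  have hb : ∀ t, |b t| ≤ C := by
    intro t
    rw [abs_le]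
    constructor
    · exact le_max_left _ _
    · exact max_le (by linarith) (min_le_left _ _)
  have hbeq : ∀ t ∈ Icc (0:ℝ) t0, b t = a t := by
    intro t ht
    have h1 := hC t ht
    rw [Real.norm_eq_abs, abs_le] at h1
    simp only [hbdef]
    rw [min_eq_right h1.2, max_eq_right h1.1]
  set v : ℝ → ℝ → ℝ := fun t y => b t * y with hvdef
  have hlip : ∀ t, LipschitzOnWith (Real.toNNReal C) (v t) univ := by
    intro t
    apply LipschitzOnWith.of_dist_le_mul
    intro p _ q _
    simp only [hvdef, Real.dist_eq]
    rw [← mul_sub, abs_mul, Real.coe_toNNReal C hC0]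
    exact mul_le_mul_of_nonneg_right (hb t) (abs_nonneg _)
  have hsIcc : Icc s t0 ⊆ Icc (0:ℝ) t0 := Icc_subset_Icc hs.1 (le_refl _)
  have key : EqOn f (fun _ => (0:ℝ)) (Icc s t0) := by
    refine ODE_solution_unique_of_mem_Icc_right (fun t _ => hlip t) (hfc.mono hsIcc) ?_
      (fun t _ => mem_univ _) continuousOn_const ?_ (fun t _ => mem_univ _) hfs
    · intro t ht
      have ht' : t ∈ Icc (0:ℝ) t0 := ⟨le_trans hs.1 ht.1, ht.2.le⟩
      have := (hd t ht'.1).hasDerivWithinAt (s := Ici t)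
      simpa only [hvdef, hbeq t ht'] using this
    · intro t _
      simpa only [hvdef, mul_zero] using (hasDerivWithinAt_const t (Ici t) (0:ℝ))
  have := key (right_mem_Icc.2 hs.2)
  simp only at this
  linarith


/-- The box `X_f = [0,S_max] × [0,I_max] × [0,D_max] × [0,T_max] × [0,1] × [0,1]`. -/
def sidtheBox (Smax Imax Dmax Tmax : ℝ) : Set (Fin 6 → ℝ) :=
  {x | x 0 ∈ Set.Icc 0 Smax ∧ x 1 ∈ Set.Icc 0 Imax ∧ x 2 ∈ Set.Icc 0 Dmax ∧
       x 3 ∈ Set.Icc 0 Tmax ∧ x 4 ∈ Set.Icc (0 : ℝ) 1 ∧ x 5 ∈ Set.Icc (0 : ℝ) 1}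

/-- The probability simplex `Δ₆` in `ℝ⁶`. -/
def probSimplex6 : Set (Fin 6 → ℝ) :=
  {x | (∀ i, x i ∈ Set.Icc (0 : ℝ) 1) ∧ ∑ i, x i = 1}

/-- `X_f` is positively invariant for the SIDTHE dynamics with the
constant feedback `u ≡ u_max`, starting from `X_f ∩ Δ₆`. -/
theorem sidthe_safe_set_invariant (α γ lam δ σ τ : ℝ)
    (hα : 0 < α) (hγ : 0 < γ) (hlam : 0 < lam) (hδ : 0 < δ) (hσ : 0 < σ) (hτ : 0 < τ)
    (umax : ℝ) (humax : 0 ≤ umax) (humax1 : umax < 1)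
    (Tmax : ℝ) (hTmax : 0 < Tmax)
    (Smax Imax Dmax : ℝ)
    (hSmax : Smax = γ / (α * (1 - umax)) * (1 + lam / (lam + γ)))
    (hImax : Imax = (δ + lam) * (σ + τ) / (γ * δ) * Tmax)
    (hDmax : Dmax = (σ + τ) / δ * Tmax)
    (x : ℝ → Fin 6 → ℝ)
    (hx : ∀ t : ℝ, 0 ≤ t → HasDerivAt x (sidthe α γ lam δ σ τ umax (x t)) t)
    (h0 : x 0 ∈ sidtheBox Smax Imax Dmax Tmax ∩ probSimplex6) :
    ∀ t : ℝ, 0 ≤ t → x t ∈ sidtheBox Smax Imax Dmax Tmax := by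
  obtain ⟨hbox, hsimp⟩ := h0
  obtain ⟨hS, hI, hD, hT, hH, hE⟩ := hbox
  have hlg : 0 < lam + γ := by linarith
  have hu : 0 < 1 - umax := by linarith
  set c := α * (1 - umax) with hc
  have hc0 : 0 < c := mul_pos hα hu
  set kI := γ * (1 + lam / (lam + γ)) with hkI
  have hkI0 : 0 < kI := by
    apply mul_pos hγ
    have : 0 < lam / (lam + γ) := div_pos hlam hlg
    linarith
  -- component continuity
  have hxcont : ∀ i, ContinuousOn (fun t => x t i) (Ici (0:ℝ)) := by
    intro i t ht
    exact ((continuous_apply i).continuousAt.comp (hx t ht).continuousAt).continuousWithinAt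
  -- component derivatives
  have dcomp : ∀ t ∈ Ici (0:ℝ), ∀ i, HasDerivAt (fun t => x t i)
      (sidthe α γ lam δ σ τ umax (x t) i) t :=
    fun t ht i => hasDerivAt_pi.1 (hx t ht) i
  have dS : ∀ t ∈ Ici (0:ℝ), HasDerivAt (fun t => x t 0) (-(c * x t 0 * x t 1)) t := by
    intro t ht; simpa [sidthe, hc] using dcomp t ht 0
  have dI : ∀ t ∈ Ici (0:ℝ), HasDerivAt (fun t => x t 1) (c * x t 0 * x t 1 - kI * x t 1) t := by
    intro t ht; simpa [sidthe, hc, hkI] using dcomp t ht 1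
  have dD : ∀ t ∈ Ici (0:ℝ), HasDerivAt (fun t => x t 2) (γ * x t 1 - (δ + lam) * x t 2) t := by
    intro t ht; simpa [sidthe] using dcomp t ht 2
  have dT : ∀ t ∈ Ici (0:ℝ), HasDerivAt (fun t => x t 3) (δ * x t 2 - (σ + τ) * x t 3) t := by
    intro t ht; simpa [sidthe] using dcomp t ht 3
  have dH : ∀ t ∈ Ici (0:ℝ), HasDerivAt (fun t => x t 4)
      (σ * x t 3 + lam * x t 2 + lam * γ / (lam + γ) * x t 1) t := by
    intro t ht; simpa [sidthe] using dcomp t ht 4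
  have dE : ∀ t ∈ Ici (0:ℝ), HasDerivAt (fun t => x t 5) (τ * x t 3) t := by
    intro t ht; simpa [sidthe] using dcomp t ht 5
  -- Step 1: I ≥ 0
  have hI0 : ∀ t ∈ Ici (0:ℝ), 0 ≤ x t 1 := by
    apply sidthe_sign_aux (a := fun t => c * x t 0 - kI)
    · intro t ht
      have := dI t ht
      convert this using 1
      ring
    · exact (continuousOn_const.mul (hxcont 0)).sub continuousOn_const
    · exact hI.1
  -- Step 2: S ≥ 0
  have hS0 : ∀ t ∈ Ici (0:ℝ), 0 ≤ x t 0 := by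
    apply sidthe_sign_aux (a := fun t => -(c * x t 1))
    · intro t ht
      have := dS t ht
      convert this using 1
      ring
    · exact (continuousOn_const.mul (hxcont 1)).neg
    · exact hS.1
  -- Step 3: S ≤ Smax
  have hSM : ∀ t ∈ Ici (0:ℝ), 0 ≤ Smax - x t 0 := by
    apply sidthe_nonneg_aux 0 (f' := fun t => c * x t 0 * x t 1)
    · intro t ht
      have := (hasDerivAt_const t Smax).fun_sub (dS t ht)
      exact this.congr_deriv (by ring)
    · intro t ht
      have := mul_nonneg (mul_nonneg hc0.le (hS0 t ht)) (hI0 t ht)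
      linarith
    · linarith [hS.2]
  -- c * Smax = kI
  have hcS : c * Smax = kI := by
    rw [hSmax, hkI, hc]
    field_simp
  -- Step 4: I ≤ Imax
  have hIM : ∀ t ∈ Ici (0:ℝ), 0 ≤ Imax - x t 1 := by
    apply sidthe_nonneg_aux 0 (f' := fun t => kI * x t 1 - c * x t 0 * x t 1)
    · intro t ht
      have := (hasDerivAt_const t Imax).fun_sub (dI t ht)
      exact this.congr_deriv (by ring)
    · intro t ht
      have h1 : c * x t 0 ≤ kI := by
        have := hSM t ht
        nlinarith
      nlinarith [hI0 t ht]
    · linarith [hI.2]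
  -- γ * Imax = (δ + lam) * Dmax
  have hgI : γ * Imax = (δ + lam) * Dmax := by
    rw [hImax, hDmax]
    field_simp
  -- Step 5: D ≥ 0
  have hD0 : ∀ t ∈ Ici (0:ℝ), 0 ≤ x t 2 := by
    apply sidthe_nonneg_aux (δ + lam) (f' := fun t => γ * x t 1 - (δ + lam) * x t 2)
    · exact dD
    · intro t ht
      have := mul_nonneg hγ.le (hI0 t ht)
      linarith
    · exact hD.1
  -- Step 6: D ≤ Dmax
  have hDM : ∀ t ∈ Ici (0:ℝ), 0 ≤ Dmax - x t 2 := by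
    apply sidthe_nonneg_aux (δ + lam) (f' := fun t => (δ + lam) * x t 2 - γ * x t 1)
    · intro t ht
      have := (hasDerivAt_const t Dmax).fun_sub (dD t ht)
      exact this.congr_deriv (by ring)
    · intro t ht
      have h1 : γ * x t 1 ≤ γ * Imax := by
        have := hIM t ht
        nlinarith
      rw [hgI] at h1
      nlinarith [h1]
    · linarith [hD.2]
  -- δ * Dmax = (σ + τ) * Tmax
  have hdD : δ * Dmax = (σ + τ) * Tmax := by
    rw [hDmax]
    field_simp
  -- Step 7: T ≥ 0
  have hT0 : ∀ t ∈ Ici (0:ℝ), 0 ≤ x t 3 := by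
    apply sidthe_nonneg_aux (σ + τ) (f' := fun t => δ * x t 2 - (σ + τ) * x t 3)
    · exact dT
    · intro t ht
      have := mul_nonneg hδ.le (hD0 t ht)
      linarith
    · exact hT.1
  -- Step 8: T ≤ Tmax
  have hTM : ∀ t ∈ Ici (0:ℝ), 0 ≤ Tmax - x t 3 := by
    apply sidthe_nonneg_aux (σ + τ) (f' := fun t => (σ + τ) * x t 3 - δ * x t 2)
    · intro t ht
      have := (hasDerivAt_const t Tmax).fun_sub (dT t ht)
      exact this.congr_deriv (by ring)
    · intro t ht
      have h1 : δ * x t 2 ≤ δ * Dmax := by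
        have := hDM t ht
        nlinarith
      rw [hdD] at h1
      nlinarith [h1]
    · linarith [hT.2]
  -- Step 9: H ≥ 0
  have hH0 : ∀ t ∈ Ici (0:ℝ), 0 ≤ x t 4 := by
    apply sidthe_nonneg_aux 0
      (f' := fun t => σ * x t 3 + lam * x t 2 + lam * γ / (lam + γ) * x t 1)
    · exact dH
    · intro t ht
      have h1 := mul_nonneg hσ.le (hT0 t ht)
      have h2 := mul_nonneg hlam.le (hD0 t ht)
      have h3 : 0 ≤ lam * γ / (lam + γ) * x t 1 :=
        mul_nonneg (by positivity) (hI0 t ht)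
      linarith
    · exact hH.1
  -- Step 10: E ≥ 0
  have hE0 : ∀ t ∈ Ici (0:ℝ), 0 ≤ x t 5 := by
    apply sidthe_nonneg_aux 0 (f' := fun t => τ * x t 3)
    · exact dE
    · intro t ht
      have := mul_nonneg hτ.le (hT0 t ht)
      linarith
    · exact hE.1
  -- Step 11: the sum is conserved
  have dSum : ∀ t ∈ Ici (0:ℝ), HasDerivAt (fun t => ∑ i, x t i) 0 t := by
    intro t ht
    have h1 : HasDerivAt (fun t => ∑ i, x t i) (∑ i, sidthe α γ lam δ σ τ umax (x t) i) t :=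
      HasDerivAt.fun_sum (fun i _ => dcomp t ht i)
    have h2 : ∑ i, sidthe α γ lam δ σ τ umax (x t) i = 0 := by
      rw [Fin.sum_univ_six]
      show -(α * (1 - umax) * x t 0 * x t 1) +
          (α * (1 - umax) * x t 0 * x t 1 - γ * (1 + lam / (lam + γ)) * x t 1) +
          (γ * x t 1 - (δ + lam) * x t 2) + (δ * x t 2 - (σ + τ) * x t 3) +
          (σ * x t 3 + lam * x t 2 + lam * γ / (lam + γ) * x t 1) + τ * x t 3 = 0
      field_simp
      ring
    rwa [h2] at h1
  have hSum : ∀ t ∈ Ici (0:ℝ), ∑ i, x t i = 1 := by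
    intro t ht
    have hs0 : ∑ i, x 0 i = 1 := hsimp.2
    have hle : ∀ t ∈ Ici (0:ℝ), 0 ≤ (∑ i, x t i) - 1 := by
      apply sidthe_nonneg_aux 0 (f' := fun _ => (0:ℝ))
      · intro s hs
        simpa using (dSum s hs).fun_sub (hasDerivAt_const s (1:ℝ))
      · intro s _; simp
      · simp [hs0]
    have hge : ∀ t ∈ Ici (0:ℝ), 0 ≤ 1 - ∑ i, x t i := by
      apply sidthe_nonneg_aux 0 (f' := fun _ => (0:ℝ))
      · intro s hs
        simpa using (hasDerivAt_const s (1:ℝ)).fun_sub (dSum s hs)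
      · intro s _; simp
      · simp [hs0]
    have := hle t ht
    have := hge t ht
    linarith
  -- assemble
  intro t ht
  have hsum := hSum t ht
  rw [Fin.sum_univ_six] at hsum
  have h5 : x t 4 ≤ 1 := by
    have := hS0 t ht; have := hI0 t ht; have := hD0 t ht
    have := hT0 t ht; have := hE0 t ht
    linarith
  have h6 : x t 5 ≤ 1 := by
    have := hS0 t ht; have := hI0 t ht; have := hD0 t ht
    have := hT0 t ht; have := hH0 t ht
    linarith
  exact ⟨⟨hS0 t ht, by linarith [hSM t ht]⟩, ⟨hI0 t ht, by linarith [hIM t ht]⟩,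
    ⟨hD0 t ht, by linarith [hDM t ht]⟩, ⟨hT0 t ht, by linarith [hTM t ht]⟩,
    ⟨hH0 t ht, h5⟩, ⟨hE0 t ht, h6⟩⟩
end

section
/- The probability simplex is positively invariant for the SIDTHE dynamics: if u : ℝ → [0,1] is continuous and x : ℝ → ℝ⁶ is differentiable with x'(t) = f(x(t), u(t)) for all t ≥ 0, and x(0) ∈ Δ₆, then x(t) ∈ Δ₆ for every t ≥ 0. -/
/-- If `y' t = d t ≥ b t * y t` on `[0,∞)` with `b` continuous and `y 0 ≥ 0`,
then `y ≥ 0` on `[0,∞)`. -/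
lemma nonneg_of_deriv_ge_linear (y d b : ℝ → ℝ) (hb : Continuous b)
    (hy : ∀ t, 0 ≤ t → HasDerivAt y (d t) t)
    (hd : ∀ t, 0 ≤ t → b t * y t ≤ d t)
    (h0 : 0 ≤ y 0) : ∀ t, 0 ≤ t → 0 ≤ y t := by
  intro T hT
  set A : ℝ → ℝ := fun s => ∫ r in (0:ℝ)..s, b r with hA_def
  have hA : ∀ s : ℝ, HasDerivAt A (b s) s := fun s =>
    (hb.integral_hasStrictDerivAt 0 s).hasDerivAt
  set z : ℝ → ℝ := fun s => y s * Real.exp (-(A s)) with hz_def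
  have hz : ∀ s, 0 ≤ s → HasDerivAt z ((d s - b s * y s) * Real.exp (-(A s))) s := by
    intro s hs
    have h1 : HasDerivAt (fun s => y s * Real.exp (-(A s)))
        (d s * Real.exp (-(A s)) + y s * (Real.exp (-(A s)) * -b s)) s :=
      (hy s hs).mul (((hA s).neg).exp)
    convert h1 using 1
    ring
  have hmono : MonotoneOn z (Set.Icc 0 T) := by
    apply monotoneOn_of_deriv_nonneg (convex_Icc 0 T)
    · intro s hs
      exact ((hz s hs.1).continuousAt).continuousWithinAt
    · intro s hs
      rw [interior_Icc] at hs
      exact ((hz s hs.1.le).differentiableAt).differentiableWithinAt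
    · intro s hs
      rw [interior_Icc] at hs
      rw [(hz s hs.1.le).deriv]
      have := hd s hs.1.le
      have h2 : (0:ℝ) ≤ d s - b s * y s := by linarith
      positivity
  have hle : z 0 ≤ z T := hmono (Set.left_mem_Icc.2 hT) (Set.right_mem_Icc.2 hT) hT
  have hz0 : z 0 = y 0 := by
    simp [hz_def, hA_def, intervalIntegral.integral_same]
  have hzT : 0 ≤ y T * Real.exp (-(A T)) := le_trans (by rw [hz0]; exact h0) hle
  by_contra h
  push_neg at h
  nlinarith [Real.exp_pos (-(A T))]

/-- the probability simplex is positively invariant for SIDTHE. -/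
theorem sidthe_simplex_invariant (α γ lam δ σ τ : ℝ)
    (hα : 0 < α) (hγ : 0 < γ) (hlam : 0 < lam) (hδ : 0 < δ) (hσ : 0 < σ) (hτ : 0 < τ)
    (u : ℝ → ℝ) (hu_cont : Continuous u) (hu_mem : ∀ t, u t ∈ Set.Icc (0 : ℝ) 1)
    (x : ℝ → Fin 6 → ℝ)
    (hx : ∀ t : ℝ, 0 ≤ t → HasDerivAt x (sidthe α γ lam δ σ τ (u t) (x t)) t)
    (h0 : x 0 ∈ probSimplex6) :
    ∀ t : ℝ, 0 ≤ t → x t ∈ probSimplex6 := by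
  have hlg : lam + γ ≠ 0 := by positivity
  -- componentwise derivatives
  have hxi : ∀ (i : Fin 6) t, 0 ≤ t → HasDerivAt (fun s => x s i)
      (sidthe α γ lam δ σ τ (u t) (x t) i) t := by
    intro i t ht
    exact (hasDerivAt_pi.1 (hx t ht)) i
  -- continuity of components composed with max
  have hxc : ∀ (i : Fin 6), Continuous (fun t => x (max t 0) i) := by
    intro i
    have hcx : ContinuousOn (fun s => x s i) (Set.Ici 0) := fun s hs =>
      ((hxi i s hs).continuousAt).continuousWithinAt
    exact hcx.comp_continuous (continuous_id.max continuous_const)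
      (fun t => le_max_right t 0)
  -- expand the vector field components
  have hS : ∀ t, sidthe α γ lam δ σ τ (u t) (x t) 0 =
      -(α * (1 - u t) * x t 0 * x t 1) := fun t => rfl
  have hI : ∀ t, sidthe α γ lam δ σ τ (u t) (x t) 1 =
      α * (1 - u t) * x t 0 * x t 1 - γ * (1 + lam / (lam + γ)) * x t 1 := fun t => rfl
  have hD : ∀ t, sidthe α γ lam δ σ τ (u t) (x t) 2 =
      γ * x t 1 - (δ + lam) * x t 2 := fun t => rfl
  have hT : ∀ t, sidthe α γ lam δ σ τ (u t) (x t) 3 =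
      δ * x t 2 - (σ + τ) * x t 3 := fun t => rfl
  have hH : ∀ t, sidthe α γ lam δ σ τ (u t) (x t) 4 =
      σ * x t 3 + lam * x t 2 + lam * γ / (lam + γ) * x t 1 := fun t => rfl
  have hE : ∀ t, sidthe α γ lam δ σ τ (u t) (x t) 5 =
      τ * x t 3 := fun t => rfl
  obtain ⟨h01, h0sum⟩ := h0
  -- S ≥ 0
  have hSpos : ∀ t, 0 ≤ t → 0 ≤ x t 0 := by
    apply nonneg_of_deriv_ge_linear (fun s => x s 0)
      (fun t => sidthe α γ lam δ σ τ (u t) (x t) 0)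
      (fun t => -(α * (1 - u t) * x (max t 0) 1))
    · exact ((continuous_const.mul (continuous_const.sub hu_cont)).mul (hxc 1)).neg
    · exact hxi 0
    · intro t ht
      rw [hS t, max_eq_left ht]
      ring_nf
      exact le_refl _
    · exact (h01 0).1
  -- I ≥ 0
  have hIpos : ∀ t, 0 ≤ t → 0 ≤ x t 1 := by
    apply nonneg_of_deriv_ge_linear (fun s => x s 1)
      (fun t => sidthe α γ lam δ σ τ (u t) (x t) 1)
      (fun t => α * (1 - u t) * x (max t 0) 0 - γ * (1 + lam / (lam + γ)))
    · exact (((continuous_const.mul (continuous_const.sub hu_cont)).mul (hxc 0)).sub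
        continuous_const)
    · exact hxi 1
    · intro t ht
      rw [hI t, max_eq_left ht]
      ring_nf
      exact le_refl _
    · exact (h01 1).1
  -- D ≥ 0
  have hDpos : ∀ t, 0 ≤ t → 0 ≤ x t 2 := by
    apply nonneg_of_deriv_ge_linear (fun s => x s 2)
      (fun t => sidthe α γ lam δ σ τ (u t) (x t) 2)
      (fun _ => -(δ + lam)) continuous_const
    · exact hxi 2
    · intro t ht
      rw [hD t]
      have := hIpos t ht
      nlinarith
    · exact (h01 2).1
  -- T ≥ 0
  have hTpos : ∀ t, 0 ≤ t → 0 ≤ x t 3 := by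
    apply nonneg_of_deriv_ge_linear (fun s => x s 3)
      (fun t => sidthe α γ lam δ σ τ (u t) (x t) 3)
      (fun _ => -(σ + τ)) continuous_const
    · exact hxi 3
    · intro t ht
      rw [hT t]
      have := hDpos t ht
      nlinarith
    · exact (h01 3).1
  -- H ≥ 0
  have hHpos : ∀ t, 0 ≤ t → 0 ≤ x t 4 := by
    apply nonneg_of_deriv_ge_linear (fun s => x s 4)
      (fun t => sidthe α γ lam δ σ τ (u t) (x t) 4)
      (fun _ => 0) continuous_const
    · exact hxi 4
    · intro t ht
      rw [hH t]
      have h1 := hIpos t ht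
      have h2 := hDpos t ht
      have h3 := hTpos t ht
      have hc : 0 ≤ lam * γ / (lam + γ) := by positivity
      nlinarith
    · exact (h01 4).1
  -- E ≥ 0
  have hEpos : ∀ t, 0 ≤ t → 0 ≤ x t 5 := by
    apply nonneg_of_deriv_ge_linear (fun s => x s 5)
      (fun t => sidthe α γ lam δ σ τ (u t) (x t) 5)
      (fun _ => 0) continuous_const
    · exact hxi 5
    · intro t ht
      rw [hE t]
      have := hTpos t ht
      nlinarith
    · exact (h01 5).1
  have hnn : ∀ t, 0 ≤ t → ∀ i : Fin 6, 0 ≤ x t i := by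
    intro t ht i
    fin_cases i
    exacts [hSpos t ht, hIpos t ht, hDpos t ht, hTpos t ht, hHpos t ht, hEpos t ht]
  -- sum is constant
  have hsumderiv : ∀ t, 0 ≤ t → HasDerivAt (fun s => ∑ i, x s i) 0 t := by
    intro t ht
    have h := HasDerivAt.sum (u := (Finset.univ : Finset (Fin 6)))
      (fun i _ => hxi i t ht)
    have hzero : ∑ i, sidthe α γ lam δ σ τ (u t) (x t) i = 0 := by
      rw [Fin.sum_univ_six, hS t, hI t, hD t, hT t, hH t, hE t]
      field_simp
      ring
    rwa [hzero] at h
  have hsum : ∀ t, 0 ≤ t → ∑ i, x t i = 1 := by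
    intro t ht
    have hconst := constant_of_has_deriv_right_zero
      (f := fun s => ∑ i, x s i) (a := 0) (b := t)
      (fun s hs => ((hsumderiv s hs.1).continuousAt).continuousWithinAt)
      (fun s hs => ((hsumderiv s hs.1).hasDerivWithinAt))
    rw [← h0sum]
    exact hconst t (Set.right_mem_Icc.2 ht)
  -- assemble
  intro t ht
  refine ⟨fun i => ⟨hnn t ht i, ?_⟩, hsum t ht⟩
  have hle : x t i ≤ ∑ j, x t j :=
    Finset.single_le_sum (fun j _ => hnn t ht j) (Finset.mem_univ i)
  rwa [hsum t ht] at hle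
end

section
/- Exponential stability of the linear surrogate system: if ᾱS₀ < γ(2λ+γ)/(λ+γ), then for every v ∈ ℝ³ the matrix-exponential trajectory exp(t·F(S₀))·v tends to the zero vector as t → ∞. -/
open Real Filter Matrix

lemma exp_deriv_aux (c s : ℝ) :
    HasDerivAt (fun s : ℝ => Real.exp (c * s)) (c * Real.exp (c * s)) s := by
  simpa [mul_comm] using ((hasDerivAt_id s).const_mul c).exp

section aux
attribute [local instance] Matrix.linftyOpNormedRing Matrix.linftyOpNormedAlgebra
  Matrix.linftyOpNormedAddCommGroup

noncomputable def entryVec (v : Fin 3 → ℝ) (i : Fin 3) :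
    Matrix (Fin 3) (Fin 3) ℝ →ₗ[ℝ] ℝ where
  toFun A := A.mulVec v i
  map_add' A B := by simp [Matrix.add_mulVec]
  map_smul' c A := by simp [Matrix.smul_mulVec]

lemma hasDeriv_comp (M : Matrix (Fin 3) (Fin 3) ℝ) (v : Fin 3 → ℝ) (i : Fin 3) (t : ℝ) :
    HasDerivAt (fun t : ℝ => ((NormedSpace.exp (t • M)).mulVec v) i)
      ((M.mulVec ((NormedSpace.exp (t • M)).mulVec v)) i) t := by
  have hM : HasDerivAt (fun t : ℝ => NormedSpace.exp (t • M))
      (M * NormedSpace.exp (t • M)) t := hasDerivAt_exp_smul_const' M t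
  have hL := ((entryVec v i).toContinuousLinearMap.hasFDerivAt
    (x := NormedSpace.exp (t • M))).comp_hasDerivAt t hM
  have : (entryVec v i) (M * NormedSpace.exp (t • M))
      = (M.mulVec ((NormedSpace.exp (t • M)).mulVec v)) i := by
    simp [entryVec, Matrix.mulVec_mulVec]
  exact hL.congr_deriv this
end aux

lemma decay_lem {b μ C : ℝ} (hbμ : b < μ) (hC : 0 ≤ C) {y f : ℝ → ℝ}
    (hy : ∀ t, HasDerivAt y (b * y t + f t) t) (hfc : Continuous f)
    (hf : ∀ t, 0 ≤ t → |f t| ≤ C * Real.exp (μ * t)) :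
    ∀ t, 0 ≤ t → |y t| ≤ (|y 0| + C / (μ - b)) * Real.exp (μ * t) := by
  have hμb : (0:ℝ) < μ - b := by linarith
  have hgd : ∀ s, HasDerivAt (fun s => y s * Real.exp (-b * s))
      (f s * Real.exp (-b * s)) s := by
    intro s
    have h2 := (hy s).mul (exp_deriv_aux (-b) s)
    refine h2.congr_deriv ?_
    ring
  intro t ht
  have hint : IntervalIntegrable (fun s => f s * Real.exp (-b * s)) MeasureTheory.volume 0 t :=
    (hfc.mul (Real.continuous_exp.comp (continuous_const.mul continuous_id))).intervalIntegrable 0 t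
  have hftc : ∫ s in (0:ℝ)..t, f s * Real.exp (-b * s)
      = y t * Real.exp (-b * t) - y 0 * Real.exp (-b * 0) :=
    intervalIntegral.integral_eq_sub_of_hasDerivAt (fun s _ => hgd s) hint
  -- bound the integral
  have hb1 : ‖∫ s in (0:ℝ)..t, f s * Real.exp (-b * s)‖
      ≤ |∫ s in (0:ℝ)..t, C * Real.exp ((μ - b) * s)| := by
    have hae : ∀ᵐ s ∂MeasureTheory.volume.restrict (Set.uIoc 0 t),
        ‖f s * Real.exp (-b * s)‖ ≤ C * Real.exp ((μ - b) * s) := by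
      filter_upwards [MeasureTheory.ae_restrict_mem measurableSet_Ioc] with s hs
      rw [Set.uIoc_of_le ht] at hs
      have hs0 : 0 ≤ s := le_of_lt hs.1
      have := hf s hs0
      calc ‖f s * Real.exp (-b * s)‖ = |f s| * Real.exp (-b * s) := by
            rw [norm_mul]; simp [Real.norm_eq_abs, abs_of_pos (Real.exp_pos _)]
        _ ≤ (C * Real.exp (μ * s)) * Real.exp (-b * s) :=
            mul_le_mul_of_nonneg_right this (Real.exp_pos _).le
        _ = C * Real.exp ((μ - b) * s) := by
            rw [mul_assoc, ← Real.exp_add]; ring_nf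
    exact intervalIntegral.norm_integral_le_abs_of_norm_le hae
      ((continuous_const.mul (Real.continuous_exp.comp
        (continuous_const.mul continuous_id))).intervalIntegrable 0 t)
  -- compute the comparison integral
  have hcomp : ∫ s in (0:ℝ)..t, C * Real.exp ((μ - b) * s)
      = C / (μ - b) * (Real.exp ((μ - b) * t) - 1) := by
    have h3 : ∀ s : ℝ, HasDerivAt (fun s : ℝ => Real.exp ((μ - b) * s) / (μ - b))
        (Real.exp ((μ - b) * s)) s := by
      intro s
      have := (exp_deriv_aux (μ - b) s).div_const (μ - b)
      refine this.congr_deriv ?_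
      rw [mul_div_cancel_left₀ _ hμb.ne']
    rw [intervalIntegral.integral_const_mul,
      intervalIntegral.integral_eq_sub_of_hasDerivAt (fun s _ => h3 s)
        ((Real.continuous_exp.comp (continuous_const.mul continuous_id)).intervalIntegrable 0 t)]
    field_simp
    simp
  have hbound : |y t * Real.exp (-b * t) - y 0| ≤ C / (μ - b) * Real.exp ((μ - b) * t) := by
    have h4 : |y t * Real.exp (-b * t) - y 0 * Real.exp (-b * 0)|
        ≤ C / (μ - b) * (Real.exp ((μ - b) * t) - 1) := by
      have habs : |C / (μ - b) * (Real.exp ((μ - b) * t) - 1)|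
          = C / (μ - b) * (Real.exp ((μ - b) * t) - 1) := by
        apply abs_of_nonneg
        apply mul_nonneg (div_nonneg hC hμb.le)
        have : (1:ℝ) ≤ Real.exp ((μ - b) * t) := by
          rw [← Real.exp_zero]; exact Real.exp_le_exp.mpr (by nlinarith)
        linarith
      calc |y t * Real.exp (-b * t) - y 0 * Real.exp (-b * 0)|
          = ‖∫ s in (0:ℝ)..t, f s * Real.exp (-b * s)‖ := by rw [hftc]; rfl
        _ ≤ |∫ s in (0:ℝ)..t, C * Real.exp ((μ - b) * s)| := hb1
        _ = C / (μ - b) * (Real.exp ((μ - b) * t) - 1) := by rw [hcomp, habs]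
    simp only [mul_zero, neg_zero, Real.exp_zero, mul_one] at h4
    have h5 : C / (μ - b) * (Real.exp ((μ - b) * t) - 1) ≤ C / (μ - b) * Real.exp ((μ - b) * t) := by
      have : (0:ℝ) ≤ C / (μ - b) := div_nonneg hC hμb.le
      nlinarith
    linarith [h4]
  -- conclude
  have h6 : |y t| * Real.exp (-b * t) ≤ |y 0| + C / (μ - b) * Real.exp ((μ - b) * t) := by
    have : |y t| * Real.exp (-b * t) = |y t * Real.exp (-b * t) - y 0 + y 0| := by
      rw [sub_add_cancel, abs_mul, abs_of_pos (Real.exp_pos _)]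
    rw [this]
    calc |y t * Real.exp (-b * t) - y 0 + y 0|
        ≤ |y t * Real.exp (-b * t) - y 0| + |y 0| := abs_add_le _ _
      _ ≤ |y 0| + C / (μ - b) * Real.exp ((μ - b) * t) := by linarith [hbound]
  have h7 : |y t| ≤ (|y 0| + C / (μ - b) * Real.exp ((μ - b) * t)) * Real.exp (b * t) := by
    have h8 := mul_le_mul_of_nonneg_right h6 (Real.exp_pos (b * t)).le
    calc |y t| = |y t| * Real.exp (-b * t) * Real.exp (b * t) := by
          rw [mul_assoc, ← Real.exp_add]; simp
      _ ≤ _ := h8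
  calc |y t| ≤ (|y 0| + C / (μ - b) * Real.exp ((μ - b) * t)) * Real.exp (b * t) := h7
    _ = |y 0| * Real.exp (b * t) + C / (μ - b) * Real.exp (μ * t) := by
        rw [add_mul, mul_assoc, ← Real.exp_add]; ring_nf
    _ ≤ |y 0| * Real.exp (μ * t) + C / (μ - b) * Real.exp (μ * t) := by
        have : Real.exp (b * t) ≤ Real.exp (μ * t) :=
          Real.exp_le_exp.mpr (by nlinarith)
        have h0 : (0:ℝ) ≤ |y 0| := abs_nonneg _
        nlinarith
    _ = (|y 0| + C / (μ - b)) * Real.exp (μ * t) := by ring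

/-- The lower-triangular matrix `F(S₀)` of the linear surrogate system. -/
noncomputable def sidtheFmat (γ lam δ σ τ abar S0 : ℝ) : Matrix (Fin 3) (Fin 3) ℝ :=
  !![abar * S0 - γ * (2 * lam + γ) / (lam + γ), 0, 0;
     γ, -(lam + δ), 0;
     0, δ, -(σ + τ)]

/-- if `ᾱS₀ < γ(2λ+γ)/(λ+γ)`, then for every `v ∈ ℝ³` the trajectory
`exp(t·F(S₀))·v` tends to zero as `t → ∞`. -/
theorem sidthe_surrogate_exp_stable (γ lam δ σ τ abar S0 : ℝ)
    (hγ : 0 < γ) (hlam : 0 < lam) (hδ : 0 < δ) (hσ : 0 < σ) (hτ : 0 < τ)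
    (habar : 0 < abar) (hS0 : 0 ≤ S0)
    (hstab : abar * S0 < γ * (2 * lam + γ) / (lam + γ)) :
    ∀ v : Fin 3 → ℝ,
      Filter.Tendsto
        (fun t : ℝ => (NormedSpace.exp (t • sidtheFmat γ lam δ σ τ abar S0)).mulVec v)
        Filter.atTop (nhds 0) := by
  intro v
  set M := sidtheFmat γ lam δ σ τ abar S0 with hM
  obtain ⟨a, ha'⟩ : ∃ a : ℝ, a = abar * S0 - γ * (2 * lam + γ) / (lam + γ) := ⟨_, rfl⟩
  obtain ⟨b, hb'⟩ : ∃ b : ℝ, b = -(lam + δ) := ⟨_, rfl⟩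
  obtain ⟨c, hc'⟩ : ∃ c : ℝ, c = -(σ + τ) := ⟨_, rfl⟩
  have ha : a < 0 := by rw [ha']; linarith
  have hb : b < 0 := by rw [hb']; linarith
  have hc : c < 0 := by rw [hc']; linarith
  obtain ⟨μ, hμ'⟩ : ∃ μ : ℝ, μ = max a (max b c) / 2 := ⟨_, rfl⟩
  have hm : max a (max b c) < 0 := by
    simp only [max_lt_iff]; exact ⟨ha, hb, hc⟩
  have hμ0 : μ < 0 := by rw [hμ']; linarith
  have haμ : a < μ := by
    have : a ≤ max a (max b c) := le_max_left _ _
    rw [hμ']; linarith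
  have hbμ : b < μ := by
    have : b ≤ max a (max b c) := le_trans (le_max_left _ _) (le_max_right _ _)
    rw [hμ']; linarith
  have hcμ : c < μ := by
    have : c ≤ max a (max b c) := le_trans (le_max_right _ _) (le_max_right _ _)
    rw [hμ']; linarith
  set x : ℝ → Fin 3 → ℝ := fun t => (NormedSpace.exp (t • M)).mulVec v with hx
  have hD : ∀ i t, HasDerivAt (fun t => x t i) ((M.mulVec (x t)) i) t :=
    fun i t => hasDeriv_comp M v i t
  have hmv : ∀ w : Fin 3 → ℝ,
      (M.mulVec w) 0 = a * w 0 ∧ (M.mulVec w) 1 = γ * w 0 + b * w 1 ∧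
      (M.mulVec w) 2 = δ * w 1 + c * w 2 := by
    intro w
    refine ⟨?_, ?_, ?_⟩ <;>
      simp [hM, sidtheFmat, Matrix.mulVec, dotProduct, Fin.sum_univ_three, ← ha', ← hb', ← hc']
  have hcont : ∀ i, Continuous (fun t => x t i) := by
    intro i
    rw [continuous_iff_continuousAt]
    exact fun t => (hD i t).continuousAt
  -- component 0
  have hd0 : ∀ t, HasDerivAt (fun t => x t 0) (a * x t 0 + 0) t := by
    intro t; have := hD 0 t; rw [(hmv (x t)).1] at this; simpa using this
  have h0 := decay_lem haμ (le_refl (0:ℝ)) hd0 continuous_const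
    (fun t _ => by simp [Real.exp_pos])
  set K0 : ℝ := |x 0 0| + 0 / (μ - a) with hK0
  have hK0nn : 0 ≤ K0 := by
    rw [hK0]; simp [abs_nonneg]
  -- component 1
  have hd1 : ∀ t, HasDerivAt (fun t => x t 1) (b * x t 1 + γ * x t 0) t := by
    intro t; have := hD 1 t; rw [(hmv (x t)).2.1] at this
    convert this using 1; ring
  have hf1 : ∀ t, 0 ≤ t → |γ * x t 0| ≤ γ * K0 * Real.exp (μ * t) := by
    intro t ht
    rw [abs_mul, abs_of_pos hγ, mul_assoc]
    exact mul_le_mul_of_nonneg_left (h0 t ht) hγ.le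
  have h1 := decay_lem hbμ (mul_nonneg hγ.le hK0nn) hd1
    (continuous_const.mul (hcont 0)) hf1
  set K1 : ℝ := |x 0 1| + γ * K0 / (μ - b) with hK1
  have hK1nn : 0 ≤ K1 := by
    rw [hK1]
    have : 0 ≤ γ * K0 / (μ - b) := div_nonneg (mul_nonneg hγ.le hK0nn) (by linarith)
    positivity
  -- component 2
  have hd2 : ∀ t, HasDerivAt (fun t => x t 2) (c * x t 2 + δ * x t 1) t := by
    intro t; have := hD 2 t; rw [(hmv (x t)).2.2] at this
    convert this using 1; ring
  have hf2 : ∀ t, 0 ≤ t → |δ * x t 1| ≤ δ * K1 * Real.exp (μ * t) := by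
    intro t ht
    rw [abs_mul, abs_of_pos hδ, mul_assoc]
    exact mul_le_mul_of_nonneg_left (h1 t ht) hδ.le
  have h2 := decay_lem hcμ (mul_nonneg hδ.le hK1nn) hd2
    (continuous_const.mul (hcont 1)) hf2
  -- conclude
  have hexp0 : Tendsto (fun t : ℝ => Real.exp (μ * t)) atTop (nhds 0) := by
    rw [Real.tendsto_exp_comp_nhds_zero]
    exact Tendsto.const_mul_atTop_of_neg hμ0 tendsto_id
  rw [tendsto_pi_nhds]
  intro i
  have hzero : (0 : Fin 3 → ℝ) i = 0 := rfl
  rw [hzero]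
  fin_cases i
  · refine squeeze_zero_norm' ?_ (by simpa using hexp0.const_mul K0)
    filter_upwards [eventually_ge_atTop (0:ℝ)] with t ht
    simpa [Real.norm_eq_abs] using h0 t ht
  · refine squeeze_zero_norm' ?_
      (by simpa using hexp0.const_mul (|x 0 1| + γ * K0 / (μ - b)))
    filter_upwards [eventually_ge_atTop (0:ℝ)] with t ht
    simpa [Real.norm_eq_abs] using h1 t ht
  · refine squeeze_zero_norm' ?_
      (by simpa using hexp0.const_mul (|x 0 2| + δ * K1 / (μ - c)))
    filter_upwards [eventually_ge_atTop (0:ℝ)] with t ht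
    simpa [Real.norm_eq_abs] using h2 t ht
end

section
/- Linear over-approximation of the SIDTHE subsystem: let u ∈ [0,1] be a constant control, let x : ℝ → ℝ⁶ be differentiable with x'(t) = f(x(t), u) for all t ≥ 0 and all components of x(0) nonnegative, set ᾱ = α(1−u) and S₀ = S(0). Then for every t ≥ 0, the vector (I(t), D(t), T(t)) is componentwise less than or equal to exp(t·F(S₀))·(I(0), D(0), T(0)). -/
attribute [local instance] Matrix.linftyOpNormedAddCommGroup Matrix.linftyOpNormedRing
  Matrix.linftyOpNormedAlgebra

/-- Grönwall: if `f' ≤ K f` on `[0,∞)` and `f 0 ≤ 0` then `f ≤ 0` on `[0,∞)`. -/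
lemma grw_nonpos {f g : ℝ → ℝ} {K : ℝ}
    (hf : ∀ t, 0 ≤ t → HasDerivAt f (g t) t) (h0 : f 0 ≤ 0)
    (hb : ∀ t, 0 ≤ t → g t ≤ K * f t) : ∀ t, 0 ≤ t → f t ≤ 0 := by
  intro T hT
  have hcont : ContinuousOn f (Set.Icc 0 T) := fun s hs =>
    (hf s hs.1).continuousAt.continuousWithinAt
  have h := le_gronwallBound_of_liminf_deriv_right_le (f' := g) (δ := 0) (K := K) (ε := 0)
    hcont
    (fun s hs r hr => ((hf s hs.1).hasDerivWithinAt).liminf_right_slope_le hr)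
    h0 (fun s hs => by simpa using hb s hs.1) T (Set.right_mem_Icc.2 hT)
  simpa [gronwallBound_ε0_δ0] using h

/-- Sign preservation for scalar linear ODEs with continuous coefficient. -/
lemma ode_nonneg {f c : ℝ → ℝ}
    (hf : ∀ t, 0 ≤ t → HasDerivAt f (c t * f t) t)
    (hc : ∀ t, 0 ≤ t → ContinuousAt c t)
    (h0 : 0 ≤ f 0) : ∀ t, 0 ≤ t → 0 ≤ f t := by
  intro t1 ht1
  by_contra hneg
  push_neg at hneg
  have hfc : ContinuousOn f (Set.Icc 0 t1) := fun s hs =>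
    (hf s hs.1).continuousAt.continuousWithinAt
  obtain ⟨t2, ht2, hft2⟩ : ∃ t2 ∈ Set.Icc 0 t1, f t2 = 0 :=
    intermediate_value_Icc' ht1 hfc ⟨hneg.le, h0⟩
  set p : ℝ → ℝ := fun s => min t1 (max 0 s) with hpdef
  have hpmem : ∀ s, p s ∈ Set.Icc 0 t1 := fun s =>
    ⟨le_min ht1 (le_max_left 0 s), min_le_left _ _⟩
  have hpid : ∀ s ∈ Set.Icc 0 t1, p s = s := fun s hs => by
    simp [hpdef, max_eq_right hs.1, min_eq_right hs.2]
  obtain ⟨C, hC⟩ := isCompact_Icc.exists_bound_of_continuousOn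
    (fun s hs => (hc s hs.1).continuousWithinAt)
  have hC0 : 0 ≤ C := le_trans (norm_nonneg _) (hC 0 ⟨le_refl 0, ht1⟩)
  have hv : ∀ s : ℝ, LipschitzWith C.toNNReal (fun y : ℝ => c (p s) * y) := by
    intro s
    apply LipschitzWith.of_dist_le_mul
    intro y z
    rw [Real.dist_eq, Real.dist_eq, ← mul_sub, abs_mul]
    have hb : |c (p s)| ≤ (C.toNNReal : ℝ) := by
      rw [Real.coe_toNNReal C hC0]
      exact hC _ (hpmem s)
    exact mul_le_mul_of_nonneg_right hb (abs_nonneg _)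
  have huniq := ODE_solution_unique (v := fun s y => c (p s) * y) hv
    (f := f) (g := fun _ => (0:ℝ)) (a := t2) (b := t1)
    (hfc.mono (Set.Icc_subset_Icc ht2.1 le_rfl))
    (fun s hs => by
      have hs0 : s ∈ Set.Icc 0 t1 := ⟨le_trans ht2.1 hs.1, hs.2.le⟩
      have hd := (hf s hs0.1).hasDerivWithinAt (s := Set.Ici s)
      simpa [hpid s hs0] using hd)
    continuousOn_const
    (fun s hs => by simpa using (hasDerivWithinAt_const s (Set.Ici s) (0:ℝ)))
    hft2
  have hend := huniq (Set.right_mem_Icc.2 ht2.2)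
  simp only at hend
  exact absurd hend (by intro h; rw [h] at hneg; exact lt_irrefl 0 hneg)

/-- linear over-approximation of the SIDTHE `(I, D, T)` subsystem
by the matrix-exponential trajectory of `F(S(0))` with `ᾱ = α(1−u)`. -/
theorem sidthe_linear_overapprox (α γ lam δ σ τ : ℝ)
    (hα : 0 < α) (hγ : 0 < γ) (hlam : 0 < lam) (hδ : 0 < δ) (hσ : 0 < σ) (hτ : 0 < τ)
    (u : ℝ) (hu : u ∈ Set.Icc (0 : ℝ) 1)
    (x : ℝ → Fin 6 → ℝ)
    (hx : ∀ t : ℝ, 0 ≤ t → HasDerivAt x (sidthe α γ lam δ σ τ u (x t)) t)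
    (h0 : ∀ i, 0 ≤ x 0 i) :
    ∀ t : ℝ, 0 ≤ t → ∀ i : Fin 3,
      ![x t 1, x t 2, x t 3] i
        ≤ (NormedSpace.exp
            (t • sidtheFmat γ lam δ σ τ (α * (1 - u)) (x 0 0))).mulVec
              ![x 0 1, x 0 2, x 0 3] i := by
  obtain ⟨hu0, hu1⟩ := hu
  set a : ℝ := α * (1 - u) with ha_def
  have ha : 0 ≤ a := mul_nonneg hα.le (by linarith)
  have hlg : (0:ℝ) < lam + γ := by linarith
  set c1 : ℝ := γ * (2 * lam + γ) / (lam + γ) with hc1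
  -- component derivatives
  have hcomp : ∀ (i : Fin 6) (s : ℝ), 0 ≤ s →
      HasDerivAt (fun r => x r i) (sidthe α γ lam δ σ τ u (x s) i) s :=
    fun i s hs => hasDerivAt_pi.1 (hx s hs) i
  have hxc : ∀ (i : Fin 6) (s : ℝ), 0 ≤ s → ContinuousAt (fun r => x r i) s :=
    fun i s hs => ((continuous_apply i).continuousAt).comp (hx s hs).continuousAt
  -- explicit component forms
  have comp0 : ∀ y : Fin 6 → ℝ, sidthe α γ lam δ σ τ u y 0 = -(a * y 1) * y 0 := by
    intro y; simp [sidthe, ha_def]; ring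
  have comp1 : ∀ y : Fin 6 → ℝ, sidthe α γ lam δ σ τ u y 1 = (a * y 0 - c1) * y 1 := by
    intro y; simp only [sidthe, hc1, ha_def]
    norm_num [Matrix.cons_val_one, Matrix.head_cons]
    field_simp
    ring
  have comp2 : ∀ y : Fin 6 → ℝ, sidthe α γ lam δ σ τ u y 2 = γ * y 1 - (δ + lam) * y 2 := by
    intro y; simp [sidthe]
  have comp3 : ∀ y : Fin 6 → ℝ, sidthe α γ lam δ σ τ u y 3 = δ * y 2 - (σ + τ) * y 3 := by
    intro y; simp [sidthe]
  have hS : ∀ s : ℝ, 0 ≤ s → HasDerivAt (fun r => x r 0) (-(a * x s 1) * x s 0) s :=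
    fun s hs => comp0 (x s) ▸ hcomp 0 s hs
  have hI : ∀ s : ℝ, 0 ≤ s → HasDerivAt (fun r => x r 1) ((a * x s 0 - c1) * x s 1) s :=
    fun s hs => comp1 (x s) ▸ hcomp 1 s hs
  have hD : ∀ s : ℝ, 0 ≤ s → HasDerivAt (fun r => x r 2) (γ * x s 1 - (δ + lam) * x s 2) s :=
    fun s hs => comp2 (x s) ▸ hcomp 2 s hs
  have hT : ∀ s : ℝ, 0 ≤ s → HasDerivAt (fun r => x r 3) (δ * x s 2 - (σ + τ) * x s 3) s :=
    fun s hs => comp3 (x s) ▸ hcomp 3 s hs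
  -- nonnegativity of I and S
  have hInn : ∀ s : ℝ, 0 ≤ s → 0 ≤ x s 1 :=
    ode_nonneg (c := fun s => a * x s 0 - c1) hI
      (fun s hs => ((continuousAt_const.mul (hxc 0 s hs)).sub continuousAt_const))
      (h0 1)
  have hSnn : ∀ s : ℝ, 0 ≤ s → 0 ≤ x s 0 :=
    ode_nonneg (c := fun s => -(a * x s 1)) hS
      (fun s hs => (continuousAt_const.mul (hxc 1 s hs)).neg)
      (h0 0)
  -- S is bounded by S 0
  have hSle : ∀ s : ℝ, 0 ≤ s → x s 0 ≤ x 0 0 := by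
    have := grw_nonpos (f := fun s => x s 0 - x 0 0)
      (g := fun s => -(a * x s 1) * x s 0) (K := 0)
      (fun s hs => (hS s hs).sub_const _)
      (by simp)
      (fun s hs => by
        have := mul_nonneg (mul_nonneg ha (hInn s hs)) (hSnn s hs)
        simp only [zero_mul]; nlinarith)
    intro s hs
    exact sub_nonpos.mp (this s hs)
  -- the linear surrogate trajectory
  set F : Matrix (Fin 3) (Fin 3) ℝ := sidtheFmat γ lam δ σ τ a (x 0 0) with hF
  set v0 : Fin 3 → ℝ := ![x 0 1, x 0 2, x 0 3] with hv0
  let L : Matrix (Fin 3) (Fin 3) ℝ →ₗ[ℝ] (Fin 3 → ℝ) :=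
    { toFun := fun M => M.mulVec v0
      map_add' := fun A B => Matrix.add_mulVec A B v0
      map_smul' := fun r A => Matrix.smul_mulVec r A v0 }
  set z : ℝ → Fin 3 → ℝ := fun s => (NormedSpace.exp (s • F)).mulVec v0 with hz
  have hzderiv : ∀ (i : Fin 3) (s : ℝ),
      HasDerivAt (fun r => z r i) ((F.mulVec (z s)) i) s := by
    intro i s
    have hE : HasDerivAt (fun r : ℝ => NormedSpace.exp (r • F))
        (F * NormedSpace.exp (s • F)) s := hasDerivAt_exp_smul_const' F s
    have hL := (LinearMap.toContinuousLinearMap L).hasFDerivAt.comp_hasDerivAt s hE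
    have hLi := hasDerivAt_pi.1 hL i
    convert hLi using 2
    all_goals try (ext r; simp [L, Function.comp, z])
    all_goals try simp [L, z, Matrix.mulVec_mulVec]
    all_goals rfl
  have hz0 : z 0 = v0 := by
    simp [hz, Matrix.one_mulVec]
  -- explicit mulVec components
  have hmv0 : ∀ w : Fin 3 → ℝ, F.mulVec w 0 = (a * x 0 0 - c1) * w 0 := by
    intro w
    simp [hF, sidtheFmat, Matrix.mulVec, dotProduct, Fin.sum_univ_three, hc1]
    try ring
  have hmv1 : ∀ w : Fin 3 → ℝ, F.mulVec w 1 = γ * w 0 - (lam + δ) * w 1 := by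
    intro w
    simp [hF, sidtheFmat, Matrix.mulVec, dotProduct, Fin.sum_univ_three]
    try ring
  have hmv2 : ∀ w : Fin 3 → ℝ, F.mulVec w 2 = δ * w 1 - (σ + τ) * w 2 := by
    intro w
    simp [hF, sidtheFmat, Matrix.mulVec, dotProduct, Fin.sum_univ_three]
    try ring
  -- comparison, component by component
  have step1 : ∀ s : ℝ, 0 ≤ s → x s 1 ≤ z s 0 := by
    have h := grw_nonpos (f := fun s => x s 1 - z s 0)
      (g := fun s => (a * x s 0 - c1) * x s 1 - F.mulVec (z s) 0)
      (K := a * x 0 0 - c1)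
      (fun s hs => (hI s hs).sub (hzderiv 0 s))
      (by simp [hz0, hv0])
      (fun s hs => by
        beta_reduce
        rw [hmv0]
        have h1 : a * x s 0 * x s 1 ≤ a * x 0 0 * x s 1 :=
          mul_le_mul_of_nonneg_right (mul_le_mul_of_nonneg_left (hSle s hs) ha) (hInn s hs)
        nlinarith)
    intro s hs
    exact sub_nonpos.mp (h s hs)
  have step2 : ∀ s : ℝ, 0 ≤ s → x s 2 ≤ z s 1 := by
    have h := grw_nonpos (f := fun s => x s 2 - z s 1)
      (g := fun s => (γ * x s 1 - (δ + lam) * x s 2) - F.mulVec (z s) 1)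
      (K := -(lam + δ))
      (fun s hs => (hD s hs).sub (hzderiv 1 s))
      (by simp [hz0, hv0])
      (fun s hs => by
        beta_reduce
        rw [hmv1]
        have h1 : γ * (x s 1 - z s 0) ≤ 0 :=
          mul_nonpos_of_nonneg_of_nonpos hγ.le (by linarith [step1 s hs])
        nlinarith)
    intro s hs
    exact sub_nonpos.mp (h s hs)
  have step3 : ∀ s : ℝ, 0 ≤ s → x s 3 ≤ z s 2 := by
    have h := grw_nonpos (f := fun s => x s 3 - z s 2)
      (g := fun s => (δ * x s 2 - (σ + τ) * x s 3) - F.mulVec (z s) 2)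
      (K := -(σ + τ))
      (fun s hs => (hT s hs).sub (hzderiv 2 s))
      (by simp [hz0, hv0])
      (fun s hs => by
        beta_reduce
        rw [hmv2]
        have h1 : δ * (x s 2 - z s 1) ≤ 0 :=
          mul_nonpos_of_nonneg_of_nonpos hδ.le (by linarith [step2 s hs])
        nlinarith)
    intro s hs
    exact sub_nonpos.mp (h s hs)
  intro t ht i
  fin_cases i
  · simpa using step1 t ht
  · simpa using step2 t ht
  · simpa using step3 t ht
end

section
/- Exponential extinction of the epidemic below the threshold: let u ∈ [0,1] be a constant control, let x : ℝ → ℝ⁶ be differentiable with x'(t) = f(x(t), u) for all t ≥ 0, all components of x(0) nonnegative, and suppose α(1−u)·S(0) < γ(2λ+γ)/(λ+γ). Then I(t) → 0, D(t) → 0, and T(t) → 0 as t → ∞. -/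
set_option maxHeartbeats 1000000

open Filter Real Set

/-- A function with nonpositive derivative on `[0,∞)` is antitone there. -/
lemma sidthe_aux_antitone {f f' : ℝ → ℝ}
    (hf : ∀ t, (0:ℝ) ≤ t → HasDerivAt f (f' t) t)
    (h : ∀ t, (0:ℝ) ≤ t → f' t ≤ 0) : AntitoneOn f (Set.Ici 0) := by
  refine antitoneOn_of_deriv_nonpos (convex_Ici 0)
    (fun t ht => (hf t ht).continuousAt.continuousWithinAt)
    (fun t ht => ?_) (fun t ht => ?_)
  · rw [interior_Ici] at ht
    exact (hf t ht.le).differentiableAt.differentiableWithinAt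
  · rw [interior_Ici] at ht
    rw [(hf t ht.le).deriv]
    exact h t ht.le

/-- A function with nonnegative derivative on `[0,∞)` is monotone there. -/
lemma sidthe_aux_monotone {f f' : ℝ → ℝ}
    (hf : ∀ t, (0:ℝ) ≤ t → HasDerivAt f (f' t) t)
    (h : ∀ t, (0:ℝ) ≤ t → 0 ≤ f' t) : MonotoneOn f (Set.Ici 0) := by
  refine monotoneOn_of_deriv_nonneg (convex_Ici 0)
    (fun t ht => (hf t ht).continuousAt.continuousWithinAt)
    (fun t ht => ?_) (fun t ht => ?_)
  · rw [interior_Ici] at ht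
    exact (hf t ht.le).differentiableAt.differentiableWithinAt
  · rw [interior_Ici] at ht
    rw [(hf t ht.le).deriv]
    exact h t ht.le

/-- Solution formula for a scalar linear ODE `g' = a·g` on `[0,∞)`. -/
lemma sidthe_aux_linear_ode {a g : ℝ → ℝ} (ha : Continuous a)
    (hg : ∀ t, (0:ℝ) ≤ t → HasDerivAt g (a t * g t) t) :
    ∀ t, (0:ℝ) ≤ t → g t = g 0 * Real.exp (∫ s in (0:ℝ)..t, a s) := by
  set A : ℝ → ℝ := fun t => ∫ s in (0:ℝ)..t, a s with hA_def
  have hA : ∀ t, HasDerivAt A (a t) t := fun t =>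
    (ha.integral_hasStrictDerivAt 0 t).hasDerivAt
  set J : ℝ → ℝ := fun t => g t * Real.exp (-A t) with hJ_def
  have hJ : ∀ t, (0:ℝ) ≤ t → HasDerivAt J 0 t := by
    intro t ht
    have h1 : HasDerivAt (fun y => g y * Real.exp (-A y))
        (a t * g t * Real.exp (-A t) + g t * (Real.exp (-A t) * -a t)) t := (hg t ht).mul ((hA t).neg.exp)
    convert h1 using 1
    ring
  intro t ht
  have hconst : J t = J 0 := by
    refine constant_of_has_deriv_right_zero (f := J) (a := 0) (b := t)
      (fun s hs => (hJ s hs.1).continuousAt.continuousWithinAt)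
      (fun s hs => (hJ s hs.1).hasDerivWithinAt) t (by constructor <;> simp [ht])
  have hA0 : A 0 = 0 := intervalIntegral.integral_same
  have hexp : Real.exp (-A t) * Real.exp (A t) = 1 := by
    rw [← Real.exp_add]; simp
  have hJt : g t * Real.exp (-A t) = g 0 := by
    have := hconst
    simp only [hJ_def, hA0, neg_zero, Real.exp_zero, mul_one] at this
    exact this
  calc g t = g t * (Real.exp (-A t) * Real.exp (A t)) := by rw [hexp, mul_one]
    _ = (g t * Real.exp (-A t)) * Real.exp (A t) := by ring
    _ = g 0 * Real.exp (A t) := by rw [hJt]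

/-- Decay comparison: if `g' = inp - k g` with `0 ≤ inp ≤ C e^{-ρ t}` and `0 < ρ < k`,
then `0 ≤ g t ≤ (g 0 + C/(k-ρ)) e^{-ρ t}` for `t ≥ 0`. -/
lemma sidthe_aux_decay {k ρ C : ℝ} (hρ : 0 < ρ) (hρk : ρ < k) (hC : 0 ≤ C)
    {g inp : ℝ → ℝ} (hg0 : 0 ≤ g 0)
    (hg : ∀ t, (0:ℝ) ≤ t → HasDerivAt g (inp t - k * g t) t)
    (hinp0 : ∀ t, (0:ℝ) ≤ t → 0 ≤ inp t)
    (hinpC : ∀ t, (0:ℝ) ≤ t → inp t ≤ C * Real.exp (-ρ * t)) :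
    ∀ t, (0:ℝ) ≤ t → 0 ≤ g t ∧ g t ≤ (g 0 + C / (k - ρ)) * Real.exp (-ρ * t) := by
  have hk : 0 < k := hρ.trans hρk
  have hkρ : 0 < k - ρ := by linarith
  set φ : ℝ → ℝ := fun t => g t * Real.exp (k * t) with hφ_def
  have hφ : ∀ t, (0:ℝ) ≤ t → HasDerivAt φ (inp t * Real.exp (k * t)) t := by
    intro t ht
    have h1 : HasDerivAt (fun y => g y * Real.exp (k * id y))
        ((inp t - k * g t) * Real.exp (k * t) + g t * (Real.exp (k * t) * (k * 1))) t :=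
      (hg t ht).mul ((hasDerivAt_id t).const_mul k).exp
    convert h1 using 1
    simp only [id_eq]
    all_goals ring
  have hφmono : MonotoneOn φ (Set.Ici 0) := sidthe_aux_monotone hφ
    (fun t ht => mul_nonneg (hinp0 t ht) (Real.exp_pos _).le)
  set χ : ℝ → ℝ := fun t => φ t - C / (k - ρ) * Real.exp ((k - ρ) * t) with hχ_def
  have hχ : ∀ t, (0:ℝ) ≤ t →
      HasDerivAt χ (inp t * Real.exp (k * t) - C * Real.exp ((k - ρ) * t)) t := by
    intro t ht
    have h2 : HasDerivAt (fun s => C / (k - ρ) * Real.exp ((k - ρ) * s))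
        (C / (k - ρ) * (Real.exp ((k - ρ) * t) * ((k - ρ) * 1))) t :=
      (((hasDerivAt_id t).const_mul (k - ρ)).exp).const_mul (C / (k - ρ))
    have h1 : HasDerivAt (fun y => φ y - C / (k - ρ) * Real.exp ((k - ρ) * y)) _ t :=
      (hφ t ht).sub h2
    convert h1 using 1
    field_simp
  have hχanti : AntitoneOn χ (Set.Ici 0) := by
    refine sidthe_aux_antitone hχ (fun t ht => ?_)
    have hE : Real.exp ((k - ρ) * t) = Real.exp (k * t) * Real.exp (-ρ * t) := by
      rw [← Real.exp_add]; ring_nf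
    have := hinpC t ht
    have hP := (Real.exp_pos (k * t)).le
    nlinarith [Real.exp_pos (-ρ * t)]
  intro t ht
  have htmem : t ∈ Set.Ici (0:ℝ) := ht
  have h0mem : (0:ℝ) ∈ Set.Ici (0:ℝ) := Set.self_mem_Ici
  have hP : (0:ℝ) < Real.exp (k * t) := Real.exp_pos _
  have hQ : (0:ℝ) < Real.exp (-ρ * t) := Real.exp_pos _
  have hPQ : Real.exp (k * t) * Real.exp (-ρ * t) = Real.exp ((k - ρ) * t) := by
    rw [← Real.exp_add]; ring_nf
  have hPQ1 : (1:ℝ) ≤ Real.exp ((k - ρ) * t) :=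
    Real.one_le_exp (by positivity)
  constructor
  · have h1 : g 0 * Real.exp (k * 0) ≤ g t * Real.exp (k * t) := hφmono h0mem htmem ht
    simp only [mul_zero, Real.exp_zero, mul_one] at h1
    nlinarith
  · have h1 : g t * Real.exp (k * t) - C / (k - ρ) * Real.exp ((k - ρ) * t)
        ≤ g 0 * Real.exp (k * 0) - C / (k - ρ) * Real.exp ((k - ρ) * 0) :=
      hχanti h0mem htmem ht
    simp only [mul_zero, Real.exp_zero, mul_one] at h1
    have h3 : g t * Real.exp (k * t) ≤ g 0 - C / (k - ρ)
        + C / (k - ρ) * Real.exp ((k - ρ) * t) := by linarith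
    have hc' : 0 ≤ C / (k - ρ) := div_nonneg hC hkρ.le
    rw [← mul_le_mul_iff_of_pos_right hP]
    calc g t * Real.exp (k * t)
        ≤ g 0 - C / (k - ρ) + C / (k - ρ) * Real.exp ((k - ρ) * t) := h3
      _ ≤ (g 0 + C / (k - ρ)) * Real.exp (-ρ * t) * Real.exp (k * t) := by
          nlinarith



/-- exponential extinction below the threshold: under a constant
control `u ∈ [0,1]` with `α(1−u)S(0) < γ(2λ+γ)/(λ+γ)`, the compartments
`I`, `D` and `T` all tend to `0` as `t → ∞`. -/
theorem sidthe_extinction (α γ lam δ σ τ : ℝ)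
    (hα : 0 < α) (hγ : 0 < γ) (hlam : 0 < lam) (hδ : 0 < δ) (hσ : 0 < σ) (hτ : 0 < τ)
    (u : ℝ) (hu : u ∈ Set.Icc (0 : ℝ) 1)
    (x : ℝ → Fin 6 → ℝ)
    (hx : ∀ t : ℝ, 0 ≤ t → HasDerivAt x (sidthe α γ lam δ σ τ u (x t)) t)
    (h0 : ∀ i, 0 ≤ x 0 i)
    (hthr : α * (1 - u) * x 0 0 < γ * (2 * lam + γ) / (lam + γ)) :
    Filter.Tendsto (fun t => x t 1) Filter.atTop (nhds 0)
    ∧ Filter.Tendsto (fun t => x t 2) Filter.atTop (nhds 0)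
    ∧ Filter.Tendsto (fun t => x t 3) Filter.atTop (nhds 0) := by
  obtain ⟨hu0, hu1⟩ := hu
  have hau : 0 ≤ α * (1 - u) := mul_nonneg hα.le (by linarith)
  have hlg : 0 < lam + γ := by linarith
  set c : ℝ := γ * (1 + lam / (lam + γ)) with hc_def
  have hkey : 1 + lam / (lam + γ) = (2 * lam + γ) / (lam + γ) := by
    field_simp; ring
  have hc_eq : c = γ * (2 * lam + γ) / (lam + γ) := by
    rw [hc_def, hkey, mul_div_assoc]
  set ε : ℝ := c - α * (1 - u) * x 0 0 with hε_def
  have hε : 0 < ε := by rw [hε_def, hc_eq]; linarith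
  -- component derivatives
  have hcomp : ∀ t, (0:ℝ) ≤ t → ∀ i,
      HasDerivAt (fun s => x s i) (sidthe α γ lam δ σ τ u (x t) i) t :=
    fun t ht i => (hasDerivAt_pi.mp (hx t ht)) i
  have hS' : ∀ t, (0:ℝ) ≤ t →
      HasDerivAt (fun s => x s 0) (-(α * (1 - u) * x t 0 * x t 1)) t := by
    intro t ht; simpa [sidthe] using hcomp t ht 0
  have hI0 : ∀ t, (0:ℝ) ≤ t →
      HasDerivAt (fun s => x s 1) (α * (1 - u) * x t 0 * x t 1 - c * x t 1) t := by
    intro t ht; simpa [sidthe, hc_def] using hcomp t ht 1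
  have hD0 : ∀ t, (0:ℝ) ≤ t →
      HasDerivAt (fun s => x s 2) (γ * x t 1 - (δ + lam) * x t 2) t := by
    intro t ht; simpa [sidthe] using hcomp t ht 2
  have hT0 : ∀ t, (0:ℝ) ≤ t →
      HasDerivAt (fun s => x s 3) (δ * x t 2 - (σ + τ) * x t 3) t := by
    intro t ht; simpa [sidthe] using hcomp t ht 3
  -- continuity of truncated components
  have hxc : ∀ i, Continuous fun t => x (max t 0) i := by
    intro i
    rw [continuous_iff_continuousAt]
    intro t
    have h1 : ContinuousAt (fun s => x s i) (max t 0) :=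
      (hcomp (max t 0) (le_max_right t 0) i).continuousAt
    have h2 : Continuous fun t : ℝ => max t 0 := continuous_id.max continuous_const
    exact ContinuousAt.comp (g := fun s => x s i) (f := fun t : ℝ => max t 0)
      h1 h2.continuousAt
  -- nonnegativity of I
  set a : ℝ → ℝ := fun t => α * (1 - u) * x (max t 0) 0 - c with ha_def
  have ha : Continuous a := (continuous_const.mul (hxc 0)).sub continuous_const
  have hI' : ∀ t, (0:ℝ) ≤ t → HasDerivAt (fun s => x s 1) (a t * x t 1) t := by
    intro t ht
    convert hI0 t ht using 1
    simp only [ha_def, max_eq_left ht]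
    ring
  have hIsol := sidthe_aux_linear_ode ha hI'
  have hInn : ∀ t, (0:ℝ) ≤ t → 0 ≤ x t 1 := by
    intro t ht
    rw [hIsol t ht]
    exact mul_nonneg (h0 1) (Real.exp_pos _).le
  -- S is bounded by its initial value
  set b : ℝ → ℝ := fun t => -(α * (1 - u) * x (max t 0) 1) with hb_def
  have hb : Continuous b := (continuous_const.mul (hxc 1)).neg
  have hSd : ∀ t, (0:ℝ) ≤ t → HasDerivAt (fun s => x s 0) (b t * x t 0) t := by
    intro t ht
    convert hS' t ht using 1
    simp only [hb_def, max_eq_left ht]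
    ring
  have hSsol := sidthe_aux_linear_ode hb hSd
  have hBint : ∀ t, (0:ℝ) ≤ t → (∫ s in (0:ℝ)..t, b s) ≤ 0 := by
    intro t ht
    have h1 : (∫ s in (0:ℝ)..t, b s) ≤ ∫ s in (0:ℝ)..t, (0:ℝ) := by
      refine intervalIntegral.integral_mono_on ht (hb.intervalIntegrable 0 t)
        (continuous_const.intervalIntegrable 0 t) (fun s _ => ?_)
      simp only [hb_def]
      have := hInn (max s 0) (le_max_right s 0)
      nlinarith
    simpa using h1
  have hSle : ∀ t, (0:ℝ) ≤ t → x t 0 ≤ x 0 0 := by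
    intro t ht
    rw [hSsol t ht]
    have h1 : Real.exp (∫ s in (0:ℝ)..t, b s) ≤ 1 :=
      Real.exp_le_one_iff.2 (hBint t ht)
    nlinarith [h0 0]
  have ha_le : ∀ t, (0:ℝ) ≤ t → a t ≤ -ε := by
    intro t ht
    have h1 := mul_le_mul_of_nonneg_left (hSle t ht) hau
    simp only [ha_def, hε_def, max_eq_left ht]
    linarith
  -- exponential bound on I
  have hχI : ∀ t, (0:ℝ) ≤ t → HasDerivAt (fun s => x s 1 * Real.exp (ε * s))
      ((a t + ε) * (x t 1 * Real.exp (ε * t))) t := by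
    intro t ht
    have h1 : HasDerivAt (fun y => x y 1 * Real.exp (ε * id y))
        (a t * x t 1 * Real.exp (ε * t) + x t 1 * (Real.exp (ε * t) * (ε * 1))) t :=
      (hI' t ht).mul ((hasDerivAt_id t).const_mul ε).exp
    convert h1 using 1
    simp only [id_eq]
    ring
  have hχIanti : AntitoneOn (fun s => x s 1 * Real.exp (ε * s)) (Set.Ici 0) := by
    refine sidthe_aux_antitone hχI (fun t ht => ?_)
    have h1 := ha_le t ht
    have h2 := hInn t ht
    nlinarith [mul_nonneg (neg_nonneg.2 (by linarith : a t + ε ≤ 0))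
      (mul_nonneg h2 (Real.exp_pos (ε * t)).le)]
  have hIbd : ∀ t, (0:ℝ) ≤ t → x t 1 ≤ x 0 1 * Real.exp (-ε * t) := by
    intro t ht
    have h1 : x t 1 * Real.exp (ε * t) ≤ x 0 1 * Real.exp (ε * 0) :=
      hχIanti Set.self_mem_Ici ht ht
    simp only [mul_zero, Real.exp_zero, mul_one] at h1
    have h2 : Real.exp (ε * t) * Real.exp (-ε * t) = 1 := by
      rw [← Real.exp_add]; simp
    have h3 := mul_le_mul_of_nonneg_right h1 (Real.exp_pos (-ε * t)).le
    rw [mul_assoc, h2, mul_one] at h3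
    exact h3
  -- decay of D
  set k1 : ℝ := δ + lam with hk1_def
  have hk1 : 0 < k1 := by rw [hk1_def]; linarith
  set ρ1 : ℝ := min ε (k1 / 2) with hρ1_def
  have hρ1 : 0 < ρ1 := lt_min hε (by linarith)
  have hρ1k : ρ1 < k1 := (min_le_right _ _).trans_lt (by linarith)
  have hρ1ε : ρ1 ≤ ε := min_le_left _ _
  set C1 : ℝ := γ * x 0 1 with hC1_def
  have hC1 : 0 ≤ C1 := mul_nonneg hγ.le (h0 1)
  have hD' : ∀ t, (0:ℝ) ≤ t → HasDerivAt (fun s => x s 2)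
      ((fun s => γ * x (max s 0) 1) t - k1 * x t 2) t := by
    intro t ht
    convert hD0 t ht using 1
    simp only [max_eq_left ht, hk1_def]
  have hinp10 : ∀ t, (0:ℝ) ≤ t → 0 ≤ (fun s => γ * x (max s 0) 1) t := by
    intro t ht
    exact mul_nonneg hγ.le (hInn (max t 0) (le_max_right t 0))
  have hinp1C : ∀ t, (0:ℝ) ≤ t →
      (fun s => γ * x (max s 0) 1) t ≤ C1 * Real.exp (-ρ1 * t) := by
    intro t ht
    simp only [max_eq_left ht, hC1_def]
    have e1 : Real.exp (-ε * t) ≤ Real.exp (-ρ1 * t) :=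
      Real.exp_le_exp.2 (by nlinarith)
    have h1 := mul_le_mul_of_nonneg_left (hIbd t ht) hγ.le
    have h2 := mul_le_mul_of_nonneg_left e1 (mul_nonneg hγ.le (h0 1))
    nlinarith
  have hDbd := sidthe_aux_decay hρ1 hρ1k hC1 (h0 2) hD' hinp10 hinp1C
  set M1 : ℝ := x 0 2 + C1 / (k1 - ρ1) with hM1_def
  have hM1 : 0 ≤ M1 := by
    rw [hM1_def]
    have := div_nonneg hC1 (by linarith : (0:ℝ) ≤ k1 - ρ1)
    linarith [h0 2]
  -- decay of T
  set k2 : ℝ := σ + τ with hk2_def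
  have hk2 : 0 < k2 := by rw [hk2_def]; linarith
  set ρ2 : ℝ := min ρ1 (k2 / 2) with hρ2_def
  have hρ2 : 0 < ρ2 := lt_min hρ1 (by linarith)
  have hρ2k : ρ2 < k2 := (min_le_right _ _).trans_lt (by linarith)
  have hρ2ρ1 : ρ2 ≤ ρ1 := min_le_left _ _
  set C2 : ℝ := δ * M1 with hC2_def
  have hC2 : 0 ≤ C2 := mul_nonneg hδ.le hM1
  have hT' : ∀ t, (0:ℝ) ≤ t → HasDerivAt (fun s => x s 3)
      ((fun s => δ * x (max s 0) 2) t - k2 * x t 3) t := by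
    intro t ht
    convert hT0 t ht using 1
    simp only [max_eq_left ht, hk2_def]
  have hinp20 : ∀ t, (0:ℝ) ≤ t → 0 ≤ (fun s => δ * x (max s 0) 2) t := by
    intro t ht
    exact mul_nonneg hδ.le (hDbd (max t 0) (le_max_right t 0)).1
  have hinp2C : ∀ t, (0:ℝ) ≤ t →
      (fun s => δ * x (max s 0) 2) t ≤ C2 * Real.exp (-ρ2 * t) := by
    intro t ht
    simp only [max_eq_left ht, hC2_def]
    have e1 : Real.exp (-ρ1 * t) ≤ Real.exp (-ρ2 * t) :=
      Real.exp_le_exp.2 (by nlinarith)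
    have h1 := mul_le_mul_of_nonneg_left (hDbd t ht).2 hδ.le
    have h2 := mul_le_mul_of_nonneg_left e1 (mul_nonneg hδ.le hM1)
    nlinarith
  have hTbd := sidthe_aux_decay hρ2 hρ2k hC2 (h0 3) hT' hinp20 hinp2C
  -- limits
  have htend : ∀ M ρ : ℝ, 0 < ρ →
      Filter.Tendsto (fun t => M * Real.exp (-ρ * t)) Filter.atTop (nhds 0) := by
    intro M ρ hρ'
    have h1 : Filter.Tendsto (fun t : ℝ => ρ * t) Filter.atTop Filter.atTop :=
      Filter.Tendsto.const_mul_atTop hρ' tendsto_id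
    have h2 : Filter.Tendsto (fun t : ℝ => Real.exp (-(ρ * t))) Filter.atTop (nhds 0) :=
      Real.tendsto_exp_neg_atTop_nhds_zero.comp h1
    have h3 := h2.const_mul M
    simpa [neg_mul] using h3
  have hsq : ∀ (f : ℝ → ℝ) (M ρ : ℝ), 0 < ρ →
      (∀ t, (0:ℝ) ≤ t → 0 ≤ f t ∧ f t ≤ M * Real.exp (-ρ * t)) →
      Filter.Tendsto f Filter.atTop (nhds 0) := by
    intro f M ρ hρ' hbound
    refine squeeze_zero' ?_ ?_ (htend M ρ hρ')
    · filter_upwards [Filter.eventually_ge_atTop (0:ℝ)] with t ht using (hbound t ht).1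
    · filter_upwards [Filter.eventually_ge_atTop (0:ℝ)] with t ht using (hbound t ht).2
  refine ⟨hsq _ (x 0 1) ε hε (fun t ht => ⟨hInn t ht, hIbd t ht⟩),
    hsq _ M1 ρ1 hρ1 (fun t ht => hDbd t ht),
    hsq _ (x 0 3 + C2 / (k2 - ρ2)) ρ2 hρ2 (fun t ht => hTbd t ht)⟩
end

section
/- The accumulator compartments are nondecreasing along SIDTHE trajectories: if u : ℝ → [0,1] is continuous and x : ℝ → ℝ⁶ is differentiable with x'(t) = f(x(t), u(t)) for all t ≥ 0 and all six components of x(0) are nonnegative, then the maps t ↦ H(t) and t ↦ E(t) are nondecreasing on [0, ∞). -/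
private lemma monoOn_of_hasDerivAt_nonneg (g g' : ℝ → ℝ)
    (h : ∀ t ∈ Set.Ici (0:ℝ), HasDerivAt g (g' t) t)
    (h' : ∀ t ∈ Set.Ici (0:ℝ), 0 ≤ g' t) : MonotoneOn g (Set.Ici 0) := by
  apply monotoneOn_of_deriv_nonneg (convex_Ici 0)
  · exact fun t ht => (h t ht).continuousAt.continuousWithinAt
  · intro t ht
    rw [interior_Ici] at ht
    exact (h t (Set.Ioi_subset_Ici_self ht)).differentiableAt.differentiableWithinAt
  · intro t ht
    rw [interior_Ici] at ht
    rw [(h t (Set.Ioi_subset_Ici_self ht)).deriv]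
    exact h' t (Set.Ioi_subset_Ici_self ht)

private lemma antiOn_of_hasDerivAt_nonpos (g g' : ℝ → ℝ)
    (h : ∀ t ∈ Set.Ici (0:ℝ), HasDerivAt g (g' t) t)
    (h' : ∀ t ∈ Set.Ici (0:ℝ), g' t ≤ 0) : AntitoneOn g (Set.Ici 0) := by
  apply antitoneOn_of_deriv_nonpos (convex_Ici 0)
  · exact fun t ht => (h t ht).continuousAt.continuousWithinAt
  · intro t ht
    rw [interior_Ici] at ht
    exact (h t (Set.Ioi_subset_Ici_self ht)).differentiableAt.differentiableWithinAt
  · intro t ht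
    rw [interior_Ici] at ht
    rw [(h t (Set.Ioi_subset_Ici_self ht)).deriv]
    exact h' t (Set.Ioi_subset_Ici_self ht)

/-- the accumulator compartments `H` and `E` are nondecreasing
along SIDTHE trajectories starting from a nonnegative state. -/
theorem sidthe_accumulators_monotone (α γ lam δ σ τ : ℝ)
    (hα : 0 < α) (hγ : 0 < γ) (hlam : 0 < lam) (hδ : 0 < δ) (hσ : 0 < σ) (hτ : 0 < τ)
    (u : ℝ → ℝ) (hu_cont : Continuous u) (hu_mem : ∀ t, u t ∈ Set.Icc (0 : ℝ) 1)
    (x : ℝ → Fin 6 → ℝ)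
    (hx : ∀ t : ℝ, 0 ≤ t → HasDerivAt x (sidthe α γ lam δ σ τ (u t) (x t)) t)
    (h0 : ∀ i, 0 ≤ x 0 i) :
    MonotoneOn (fun t => x t 4) (Set.Ici (0 : ℝ))
    ∧ MonotoneOn (fun t => x t 5) (Set.Ici (0 : ℝ)) := by
  have hm : Continuous (fun t : ℝ => max t 0) := continuous_id.max continuous_const
  have hd : ∀ (i : Fin 6), ∀ t ∈ Set.Ici (0:ℝ),
      HasDerivAt (fun s => x s i) (sidthe α γ lam δ σ τ (u t) (x t) i) t :=
    fun i t ht => hasDerivAt_pi.mp (hx t ht) i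
  have hcx : ∀ i : Fin 6, Continuous (fun t => x (max t 0) i) := by
    intro i
    refine continuous_iff_continuousAt.mpr fun t => ?_
    have h1 : ContinuousAt x (max t 0) := (hx _ (le_max_right t 0)).continuousAt
    have h2 : ContinuousAt (fun s : ℝ => x (max s 0)) t :=
      ContinuousAt.comp (x := t) (f := fun s : ℝ => max s 0) h1 hm.continuousAt
    exact (continuous_apply i).continuousAt.comp h2
  -- I ≥ 0 : I satisfies the linear ODE I' = ψ t * I
  set ψ : ℝ → ℝ := fun t =>
    α * (1 - u (max t 0)) * x (max t 0) 0 - γ * (1 + lam / (lam + γ)) with hψdef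
  have hψc : Continuous ψ :=
    ((continuous_const.mul (continuous_const.sub (hu_cont.comp hm))).mul (hcx 0)).sub
      continuous_const
  set Ψ : ℝ → ℝ := fun t => ∫ s in (0:ℝ)..t, ψ s with hΨdef
  have hΨ : ∀ t, HasDerivAt Ψ (ψ t) t := fun t =>
    intervalIntegral.integral_hasDerivAt_right (hψc.intervalIntegrable 0 t)
      hψc.aestronglyMeasurable.stronglyMeasurableAtFilter hψc.continuousAt
  have hΨ0 : Ψ 0 = 0 := intervalIntegral.integral_same
  set w : ℝ → ℝ := fun t => x t 1 * Real.exp (-Ψ t) with hwdef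
  have hw : ∀ t ∈ Set.Ici (0:ℝ), HasDerivAt w ((fun _ => (0:ℝ)) t) t := by
    intro t ht
    have hmax : max t 0 = t := max_eq_left ht
    have hexp : HasDerivAt (fun s => Real.exp (-Ψ s)) (Real.exp (-Ψ t) * (-ψ t)) t :=
      ((hΨ t).neg).exp
    have : HasDerivAt (fun s => x s 1 * Real.exp (-Ψ s)) _ t := (hd 1 t ht).mul hexp
    convert this using 1
    simp only [sidthe, hψdef, hmax]
    simp [Matrix.cons_val_one, Matrix.head_cons]
    ring
  have hwm := monoOn_of_hasDerivAt_nonneg w _ hw (fun t _ => le_refl 0)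
  have hwa := antiOn_of_hasDerivAt_nonpos w _ hw (fun t _ => le_refl 0)
  have hI : ∀ t ∈ Set.Ici (0:ℝ), 0 ≤ x t 1 := by
    intro t ht
    have h1 : w t = w 0 :=
      le_antisymm (hwa Set.self_mem_Ici ht ht) (hwm Set.self_mem_Ici ht ht)
    have h2 : w 0 = x 0 1 := by simp [hwdef, hΨ0]
    have h3 : (0:ℝ) ≤ x t 1 * Real.exp (-Ψ t) := by
      rw [show x t 1 * Real.exp (-Ψ t) = w t from rfl, h1, h2]
      exact h0 1
    exact (mul_nonneg_iff_of_pos_right (Real.exp_pos _)).mp h3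
  -- D ≥ 0
  set wD : ℝ → ℝ := fun t => x t 2 * Real.exp ((δ + lam) * t) with hwDdef
  have hwD : ∀ t ∈ Set.Ici (0:ℝ),
      HasDerivAt wD (Real.exp ((δ + lam) * t) * (γ * x t 1)) t := by
    intro t ht
    have hexp : HasDerivAt (fun s => Real.exp ((δ + lam) * s))
        (Real.exp ((δ + lam) * t) * (δ + lam)) t := by
      simpa using (((hasDerivAt_id t).const_mul (δ + lam)).exp)
    have : HasDerivAt (fun s => x s 2 * Real.exp ((δ + lam) * s)) _ t := (hd 2 t ht).mul hexp
    convert this using 1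
    simp [sidthe]
    ring
  have hwDm := monoOn_of_hasDerivAt_nonneg wD _ hwD
    (fun t ht => mul_nonneg (Real.exp_pos _).le (mul_nonneg hγ.le (hI t ht)))
  have hD : ∀ t ∈ Set.Ici (0:ℝ), 0 ≤ x t 2 := by
    intro t ht
    have h1 : wD 0 ≤ wD t := hwDm Set.self_mem_Ici ht ht
    have h2 : wD 0 = x 0 2 := by simp [hwDdef]
    have h3 : (0:ℝ) ≤ x t 2 * Real.exp ((δ + lam) * t) := by
      rw [show x t 2 * Real.exp ((δ + lam) * t) = wD t from rfl]
      exact le_trans (by rw [h2]; exact h0 2) h1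
    exact (mul_nonneg_iff_of_pos_right (Real.exp_pos _)).mp h3
  -- T ≥ 0
  set wT : ℝ → ℝ := fun t => x t 3 * Real.exp ((σ + τ) * t) with hwTdef
  have hwT : ∀ t ∈ Set.Ici (0:ℝ),
      HasDerivAt wT (Real.exp ((σ + τ) * t) * (δ * x t 2)) t := by
    intro t ht
    have hexp : HasDerivAt (fun s => Real.exp ((σ + τ) * s))
        (Real.exp ((σ + τ) * t) * (σ + τ)) t := by
      simpa using (((hasDerivAt_id t).const_mul (σ + τ)).exp)
    have : HasDerivAt (fun s => x s 3 * Real.exp ((σ + τ) * s)) _ t := (hd 3 t ht).mul hexp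
    convert this using 1
    simp [sidthe]
    ring
  have hwTm := monoOn_of_hasDerivAt_nonneg wT _ hwT
    (fun t ht => mul_nonneg (Real.exp_pos _).le (mul_nonneg hδ.le (hD t ht)))
  have hT : ∀ t ∈ Set.Ici (0:ℝ), 0 ≤ x t 3 := by
    intro t ht
    have h1 : wT 0 ≤ wT t := hwTm Set.self_mem_Ici ht ht
    have h2 : wT 0 = x 0 3 := by simp [hwTdef]
    have h3 : (0:ℝ) ≤ x t 3 * Real.exp ((σ + τ) * t) := by
      rw [show x t 3 * Real.exp ((σ + τ) * t) = wT t from rfl]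
      exact le_trans (by rw [h2]; exact h0 3) h1
    exact (mul_nonneg_iff_of_pos_right (Real.exp_pos _)).mp h3
  constructor
  · apply monoOn_of_hasDerivAt_nonneg _ (fun t => sidthe α γ lam δ σ τ (u t) (x t) 4)
      (hd 4)
    intro t ht
    have hs : sidthe α γ lam δ σ τ (u t) (x t) 4
        = σ * x t 3 + lam * x t 2 + lam * γ / (lam + γ) * x t 1 := by rfl
    rw [hs]
    have hc : 0 ≤ lam * γ / (lam + γ) := by positivity
    have := hI t ht; have := hD t ht; have := hT t ht
    positivity
  · apply monoOn_of_hasDerivAt_nonneg _ (fun t => sidthe α γ lam δ σ τ (u t) (x t) 5)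
      (hd 5)
    intro t ht
    have hs : sidthe α γ lam δ σ τ (u t) (x t) 5 = τ * x t 3 := by rfl
    rw [hs]
    exact mul_nonneg hτ.le (hT t ht)
end
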